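/- arXiv:2005.04521 — 4 statements merged into one kernel-verified Lean document; each statement's English description precedes it below -/
import Mathlib

section
/- Let L be a field and let V and W be nonempty finite sets of discrete (surjective, ℤ-valued) valuations of L, with V and W disjoint (no valuation of L belongs to both), equipped with multiplicity functions μ_V : V → ℤ⁺ and μ_W : W → ℤ⁺. Set R_V = {x ∈ L : v(x) ≥ 0 for all v ∈ V}, I_V = {x ∈ L : v(x) ≥ μ_V(v) for all v ∈ V}, and similarly R_W, I_W. Then the natural map induces a ring isomorphism (R_V ∩ R_W)/(I_V ∩ I_W) ≅ (R_V/I_V) × (R_W/I_W). -/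
/-- A discrete (surjective, `ℤ`-valued) valuation of a field `L`, written additively
with values in `ℤ ∪ {∞} = WithTop ℤ`. -/
structure DiscreteValuationOn (L : Type*) [Field L] where
  v : L → WithTop ℤ
  map_zero' : v 0 = ⊤
  map_one' : v 1 = 0
  map_mul' : ∀ x y : L, v (x * y) = v x + v y
  map_neg' : ∀ x : L, v (-x) = v x
  min_le_map_add' : ∀ x y : L, min (v x) (v y) ≤ v (x + y)
  surjective' : ∀ n : ℤ, ∃ x : L, v x = (n : WithTop ℤ)

section Helpers
variable {L : Type*} [Field L]

namespace DiscreteValuationOn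
variable (v : DiscreteValuationOn L)

theorem ne_zero_of_lt_top {x : L} (h : v.v x < ⊤) : x ≠ 0 := by
  intro h0; rw [h0, v.map_zero'] at h; exact lt_irrefl _ h

theorem exists_int {x : L} (hx : x ≠ 0) : ∃ n : ℤ, v.v x = (n : WithTop ℤ) := by
  have h1 : v.v (x * x⁻¹) = v.v x + v.v x⁻¹ := v.map_mul' x x⁻¹
  rw [mul_inv_cancel₀ hx, v.map_one'] at h1
  have : v.v x ≠ ⊤ := by
    intro h; rw [h, top_add] at h1; exact (by simp : (⊤ : WithTop ℤ) ≠ 0) h1.symm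
  obtain ⟨n, hn⟩ := WithTop.ne_top_iff_exists.mp this
  exact ⟨n, hn.symm⟩

theorem v_inv {x : L} {n : ℤ} (h : v.v x = (n : WithTop ℤ)) :
    v.v x⁻¹ = ((-n : ℤ) : WithTop ℤ) := by
  have hx : x ≠ 0 := v.ne_zero_of_lt_top (by rw [h]; exact WithTop.coe_lt_top n)
  have h1 : v.v (x * x⁻¹) = v.v x + v.v x⁻¹ := v.map_mul' x x⁻¹
  rw [mul_inv_cancel₀ hx, v.map_one', h] at h1
  obtain ⟨m, hm⟩ := v.exists_int (inv_ne_zero hx)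
  rw [hm] at h1 ⊢
  have : n + m = 0 := by exact_mod_cast h1.symm
  have : m = -n := by omega
  rw [this]

theorem v_pow {x : L} {n : ℤ} (h : v.v x = (n : WithTop ℤ)) (k : ℕ) :
    v.v (x ^ k) = ((k * n : ℤ) : WithTop ℤ) := by
  induction k with
  | zero => simpa using v.map_one'
  | succ k ih =>
    rw [pow_succ, v.map_mul', ih, h]
    norm_cast
    push_cast
    ring

theorem v_zpow {x : L} {n : ℤ} (h : v.v x = (n : WithTop ℤ)) (k : ℤ) :
    v.v (x ^ k) = ((k * n : ℤ) : WithTop ℤ) := by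
  cases k with
  | ofNat k => rw [Int.ofNat_eq_natCast, zpow_natCast]; exact_mod_cast v.v_pow h k
  | negSucc k =>
    rw [zpow_negSucc, v.v_inv (v.v_pow h (k+1))]
    congr 1
    simp [Int.negSucc_eq]
    push_cast
    ring

theorem v_add_eq_of_lt {x y : L} (h : v.v x < v.v y) : v.v (x + y) = v.v x := by
  have h1 : v.v x ≤ v.v (x + y) := le_trans (le_min le_rfl h.le) (v.min_le_map_add' x y)
  have h2 : v.v (x + y) ≤ v.v x := by
    have := v.min_le_map_add' (x + y) (-y)
    rw [add_neg_cancel_right, v.map_neg'] at this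
    rcases min_le_iff.mp this with h' | h'
    · exact h'
    · exact absurd (lt_of_lt_of_le h h') (lt_irrefl _)
  exact le_antisymm h2 h1

theorem ext_of_v_eq {v w : DiscreteValuationOn L} (h : v.v = w.v) : v = w := by
  cases v; cases w; simpa using h


/-- If every `v`-integral element is `w`-integral, then `v = w`. -/
theorem eq_of_le_imp {v w : DiscreteValuationOn L}
    (h : ∀ x : L, 0 ≤ v.v x → 0 ≤ w.v x) : v = w := by
  obtain ⟨π, hπ⟩ := v.surjective' 1
  have hπ0 : π ≠ 0 := v.ne_zero_of_lt_top (by rw [hπ]; exact WithTop.coe_lt_top _)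
  obtain ⟨c, hc⟩ := w.exists_int hπ0
  have hc0 : (0:ℤ) ≤ c := by
    have := h π (by rw [hπ]; exact_mod_cast (by norm_num : (0:ℤ) ≤ 1))
    rw [hc] at this; exact_mod_cast this
  have key : ∀ (x : L) (n : ℤ), v.v x = (n : WithTop ℤ) → w.v x = ((n * c : ℤ) : WithTop ℤ) := by
    intro x n hx
    have hx0 : x ≠ 0 := v.ne_zero_of_lt_top (by rw [hx]; exact WithTop.coe_lt_top _)
    set y := x * π ^ (-n) with hy
    have hy0 : y ≠ 0 := mul_ne_zero hx0 (zpow_ne_zero _ hπ0)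
    have hvy : v.v y = ((0:ℤ) : WithTop ℤ) := by
      rw [hy, v.map_mul', hx, v.v_zpow hπ (-n)]
      norm_cast; ring
    obtain ⟨m, hm⟩ := w.exists_int hy0
    have hm0 : m = 0 := by
      have h1 : (0:WithTop ℤ) ≤ w.v y := h y (by rw [hvy]; norm_cast)
      have h2 : (0:WithTop ℤ) ≤ w.v y⁻¹ := h y⁻¹ (by rw [v.v_inv hvy]; norm_cast)
      rw [hm] at h1
      rw [w.v_inv hm] at h2
      have h1' : (0:ℤ) ≤ m := by exact_mod_cast h1
      have h2' : (0:ℤ) ≤ -m := by exact_mod_cast h2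
      omega
    have hxy : x = y * π ^ n := by
      rw [hy, mul_assoc, ← zpow_add₀ hπ0]
      simp
    rw [hxy, w.map_mul', hm, hm0, w.v_zpow hc n]
    norm_cast
    ring
  obtain ⟨z, hz⟩ := w.surjective' 1
  have hz0 : z ≠ 0 := w.ne_zero_of_lt_top (by rw [hz]; exact WithTop.coe_lt_top _)
  obtain ⟨m, hm⟩ := v.exists_int hz0
  have h1 : ((m * c : ℤ) : WithTop ℤ) = ((1:ℤ) : WithTop ℤ) := by rw [← key z m hm, hz]
  have h1' : m * c = 1 := by exact_mod_cast h1
  have hc1 : c = 1 := by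
    rcases Int.isUnit_iff.mp (IsUnit.of_mul_eq_one (a := c) m (by linarith [mul_comm m c])) with h' | h'
    · exact h'
    · omega
  apply ext_of_v_eq
  funext x
  by_cases hx0 : x = 0
  · rw [hx0, v.map_zero', w.map_zero']
  · obtain ⟨n, hn⟩ := v.exists_int hx0
    rw [hn, key x n hn, hc1, mul_one]

/-- Lemma A: distinct discrete valuations are incomparable. -/
theorem exists_nonneg_neg {v w : DiscreteValuationOn L} (hvw : v ≠ w) :
    ∃ x : L, 0 ≤ v.v x ∧ w.v x < 0 := by
  by_contra hcon
  push_neg at hcon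
  exact hvw (eq_of_le_imp hcon)


theorem lt_top_of_lt {v : DiscreteValuationOn L} {x : L} {a : WithTop ℤ}
    (h : v.v x < a) : x ≠ 0 := v.ne_zero_of_lt_top (lt_of_lt_of_le h le_top)

/-- Pairwise version: distinct valuations admit an element negative at one,
positive at the other. -/
theorem exists_neg_pos_pair {v w : DiscreteValuationOn L} (hvw : v ≠ w) :
    ∃ t : L, v.v t < 0 ∧ 0 < w.v t := by
  obtain ⟨a, ha1, ha2⟩ := exists_nonneg_neg (v := w) (w := v) (Ne.symm hvw)
  obtain ⟨b, hb1, hb2⟩ := exists_nonneg_neg hvw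
  have ha0 : a ≠ 0 := lt_top_of_lt ha2
  have hb0 : b ≠ 0 := lt_top_of_lt hb2
  obtain ⟨na, hna⟩ := v.exists_int ha0
  obtain ⟨nb, hnb⟩ := v.exists_int hb0
  obtain ⟨ma, hma⟩ := w.exists_int ha0
  obtain ⟨mb, hmb⟩ := w.exists_int hb0
  refine ⟨a * b⁻¹, ?_, ?_⟩
  · rw [v.map_mul', hna, v.v_inv hnb]
    have h1 : na < 0 := by rw [hna] at ha2; exact_mod_cast ha2
    have h2 : 0 ≤ nb := by rw [hnb] at hb1; exact_mod_cast hb1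
    have : ((na + -nb : ℤ) : WithTop ℤ) < ((0:ℤ) : WithTop ℤ) := by
      exact_mod_cast (by omega : na + -nb < 0)
    exact_mod_cast this
  · rw [w.map_mul', hma, w.v_inv hmb]
    have h1 : 0 ≤ ma := by rw [hma] at ha1; exact_mod_cast ha1
    have h2 : mb < 0 := by rw [hmb] at hb2; exact_mod_cast hb2
    have : ((0:ℤ) : WithTop ℤ) < ((ma + -mb : ℤ) : WithTop ℤ) := by
      exact_mod_cast (by omega : (0:ℤ) < ma + -mb)
    exact_mod_cast this

/-- Artin's approximation lemma: an element negative at `v`, positive on `S`. -/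
theorem exists_neg_pos_finset (S : Finset (DiscreteValuationOn L)) :
    ∀ v : DiscreteValuationOn L, v ∉ S → ∃ t : L, v.v t < 0 ∧ ∀ u ∈ S, 0 < u.v t := by
  classical
  induction S using Finset.induction_on with
  | empty =>
    intro v _
    obtain ⟨t, ht⟩ := v.surjective' (-1)
    exact ⟨t, by rw [ht]; exact_mod_cast (by norm_num : (-1:ℤ) < 0), by simp⟩
  | @insert w S' hwS' ih =>
    intro v hv
    have hvw : v ≠ w := fun h => hv (h ▸ Finset.mem_insert_self w S')
    have hvS' : v ∉ S' := fun h => hv (Finset.mem_insert_of_mem h)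
    obtain ⟨t₁, ht₁v, ht₁S⟩ := ih v hvS'
    obtain ⟨t₂, ht₂v, ht₂w⟩ := exists_neg_pos_pair hvw
    have ht₁0 : t₁ ≠ 0 := lt_top_of_lt ht₁v
    have ht₂0 : t₂ ≠ 0 := lt_top_of_lt ht₂v
    obtain ⟨n₁, hn₁⟩ := v.exists_int ht₁0
    obtain ⟨n₂, hn₂⟩ := v.exists_int ht₂0
    obtain ⟨p, hp⟩ := w.exists_int ht₁0
    obtain ⟨q, hq⟩ := w.exists_int ht₂0
    have hn₁0 : n₁ < 0 := by rw [hn₁] at ht₁v; exact_mod_cast ht₁v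
    have hn₂0 : n₂ < 0 := by rw [hn₂] at ht₂v; exact_mod_cast ht₂v
    have hq0 : 0 < q := by rw [hq] at ht₂w; exact_mod_cast ht₂w
    -- integer value of u.v t₂
    set g : DiscreteValuationOn L → ℤ := fun u => WithTop.untopD 0 (u.v t₂) with hg
    have hgu : ∀ u : DiscreteValuationOn L, u.v t₂ = ((g u : ℤ) : WithTop ℤ) := by
      intro u
      obtain ⟨m, hm⟩ := u.exists_int ht₂0
      rw [hm, hg]; simp [hm]
    set k : ℕ := 1 + S'.sup (fun u => (-(g u)).toNat) with hk
    have hk1 : 1 ≤ k := by omega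
    have hkg : ∀ u ∈ S', (0:ℤ) < (k:ℤ) + g u := by
      intro u hu
      have h1 : (-(g u)).toNat ≤ S'.sup (fun u => (-(g u)).toNat) :=
        Finset.le_sup (f := fun u => (-(g u)).toNat) hu
      have h2 : (-(g u) : ℤ) ≤ ((-(g u)).toNat : ℤ) := Int.self_le_toNat _
      have h3 : ((-(g u)).toNat : ℤ) ≤ ((S'.sup (fun u => (-(g u)).toNat) : ℕ) : ℤ) := by
        exact_mod_cast h1
      have h4 : ((k:ℕ):ℤ) = 1 + ((S'.sup (fun u => (-(g u)).toNat) : ℕ) : ℤ) := by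
        rw [hk]; push_cast; ring
      omega
    -- value of u at t₁ for u ∈ S'
    have huS : ∀ u ∈ S', ∃ a : ℤ, u.v t₁ = ((a : ℤ) : WithTop ℤ) ∧ 1 ≤ a := by
      intro u hu
      obtain ⟨a, ha⟩ := u.exists_int ht₁0
      refine ⟨a, ha, ?_⟩
      have := ht₁S u hu
      rw [ha] at this
      exact_mod_cast this
    by_cases hp0 : 0 ≤ p
    · -- z = t₁^k * t₂
      refine ⟨t₁ ^ k * t₂, ?_, ?_⟩
      · rw [v.map_mul', v.v_pow hn₁ k, hn₂]
        have : ((k:ℤ) * n₁ + n₂ : ℤ) < (0:ℤ) := by nlinarith [Int.natCast_nonneg k]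
        exact_mod_cast this
      · intro u hu
        rcases Finset.mem_insert.mp hu with rfl | hu'
        · rw [u.map_mul', u.v_pow hp k, hq]
          have : (0:ℤ) < (k:ℤ) * p + q := by nlinarith [Int.natCast_nonneg k]
          exact_mod_cast this
        · obtain ⟨a, ha, ha1⟩ := huS u hu'
          rw [u.map_mul', u.v_pow ha k, hgu u]
          have hkk : (k:ℤ) ≤ (k:ℤ) * a := le_mul_of_one_le_right (Int.natCast_nonneg k) ha1
          have := hkg u hu'
          have : (0:ℤ) < (k:ℤ) * a + g u := by omega
          exact_mod_cast this
    · -- p < 0 : z = t₁^k * (1 + t₁^k)⁻¹ * t₂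
      push_neg at hp0
      have hkn₁ : ((k:ℤ) * n₁ : ℤ) < 0 := by nlinarith
      have hvs : v.v (t₁ ^ k + 1) = (((k:ℤ) * n₁ : ℤ) : WithTop ℤ) := by
        rw [v.v_add_eq_of_lt, v.v_pow hn₁ k]
        rw [v.v_pow hn₁ k, v.map_one']
        exact_mod_cast hkn₁
      have hs0 : (t₁ ^ k + 1) ≠ 0 := lt_top_of_lt (a := ⊤) (by rw [hvs]; exact WithTop.coe_lt_top _)
      have hkp : ((k:ℤ) * p : ℤ) < 0 := by nlinarith
      have hws : w.v (t₁ ^ k + 1) = (((k:ℤ) * p : ℤ) : WithTop ℤ) := by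
        rw [w.v_add_eq_of_lt, w.v_pow hp k]
        rw [w.v_pow hp k, w.map_one']
        exact_mod_cast hkp
      refine ⟨t₁ ^ k * (t₁ ^ k + 1)⁻¹ * t₂, ?_, ?_⟩
      · rw [v.map_mul', v.map_mul', v.v_pow hn₁ k, v.v_inv hvs, hn₂]
        have : (((k:ℤ) * n₁ + -((k:ℤ) * n₁) + n₂ : ℤ)) < (0:ℤ) := by omega
        exact_mod_cast this
      · intro u hu
        rcases Finset.mem_insert.mp hu with rfl | hu'
        · rw [u.map_mul', u.map_mul', u.v_pow hp k, u.v_inv hws, hq]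
          have : (0:ℤ) < ((k:ℤ) * p + -((k:ℤ) * p) + q : ℤ) := by omega
          exact_mod_cast this
        · obtain ⟨a, ha, ha1⟩ := huS u hu'
          have hka : (0:ℤ) < (k:ℤ) * a := by positivity
          have hus : u.v (t₁ ^ k + 1) = ((0:ℤ) : WithTop ℤ) := by
            rw [add_comm,
              u.v_add_eq_of_lt (by rw [u.map_one', u.v_pow ha k]; exact_mod_cast hka),
              u.map_one']
            norm_cast
          rw [u.map_mul', u.map_mul', u.v_pow ha k, u.v_inv hus, hgu u]
          have hkk : (k:ℤ) ≤ (k:ℤ) * a := le_mul_of_one_le_right (Int.natCast_nonneg k) ha1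
          have := hkg u hu'
          have : (0:ℤ) < ((k:ℤ) * a + -(0:ℤ) + g u : ℤ) := by omega
          exact_mod_cast this


/-- Lemma C: an element close to `1` at `v` and close to `0` at every `u ∈ S`. -/
theorem exists_close (S : Finset (DiscreteValuationOn L)) (v : DiscreteValuationOn L)
    (hv : v ∉ S) (N : ℤ) :
    ∃ e : L, (N : WithTop ℤ) ≤ v.v (e - 1) ∧ ∀ u ∈ S, (N : WithTop ℤ) ≤ u.v e := by
  obtain ⟨t, htv, htS⟩ := exists_neg_pos_finset S v hv
  have ht0 : t ≠ 0 := lt_top_of_lt htv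
  obtain ⟨n, hn⟩ := v.exists_int ht0
  have hn0 : n < 0 := by rw [hn] at htv; exact_mod_cast htv
  set k : ℕ := max 1 N.toNat with hk
  have hNk : N ≤ (k:ℤ) := le_trans (Int.self_le_toNat N) (by exact_mod_cast le_max_right 1 N.toNat)
  have hk1 : 1 ≤ k := le_max_left _ _
  have hkn : ((k:ℤ) * n : ℤ) < 0 := by nlinarith [Int.natCast_nonneg k]
  have hvs : v.v (t ^ k + 1) = (((k:ℤ) * n : ℤ) : WithTop ℤ) := by
    rw [v.v_add_eq_of_lt (by rw [v.v_pow hn k, v.map_one']; exact_mod_cast hkn), v.v_pow hn k]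
  have hs0 : (t ^ k + 1) ≠ 0 := lt_top_of_lt (a := ⊤) (by rw [hvs]; exact WithTop.coe_lt_top _)
  refine ⟨t ^ k * (t ^ k + 1)⁻¹, ?_, ?_⟩
  · have he1 : t ^ k * (t ^ k + 1)⁻¹ - 1 = -((t ^ k + 1)⁻¹) := by
      field_simp
      ring
    rw [he1, v.map_neg', v.v_inv hvs]
    have : N ≤ (-((k:ℤ) * n) : ℤ) := by nlinarith [Int.natCast_nonneg k]
    exact_mod_cast this
  · intro u hu
    obtain ⟨a, ha⟩ := u.exists_int ht0
    have ha1 : 1 ≤ a := by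
      have := htS u hu; rw [ha] at this; exact_mod_cast this
    have hka : (0:ℤ) < (k:ℤ) * a := by positivity
    have hus : u.v (t ^ k + 1) = ((0:ℤ) : WithTop ℤ) := by
      rw [add_comm, u.v_add_eq_of_lt (by rw [u.map_one', u.v_pow ha k]; exact_mod_cast hka),
        u.map_one']
      norm_cast
    rw [u.map_mul', u.v_pow ha k, u.v_inv hus]
    have hkk : (k:ℤ) ≤ (k:ℤ) * a := le_mul_of_one_le_right (Int.natCast_nonneg k) ha1
    have : N ≤ ((k:ℤ) * a + -(0:ℤ) : ℤ) := by omega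
    exact_mod_cast this

theorem le_v_sum {ι : Type*} (v : DiscreteValuationOn L) (s : Finset ι) (f : ι → L)
    {N : WithTop ℤ} (h : ∀ i ∈ s, N ≤ v.v (f i)) : N ≤ v.v (∑ i ∈ s, f i) := by
  classical
  induction s using Finset.induction_on with
  | empty => rw [Finset.sum_empty, v.map_zero']; exact le_top
  | @insert a s ha ih =>
    rw [Finset.sum_insert ha]
    refine le_trans (le_min (h a (Finset.mem_insert_self a s))
      (ih fun i hi => h i (Finset.mem_insert_of_mem hi))) (v.min_le_map_add' _ _)

/-- Lemma D: an element close to `1` on all of `V` and close to `0` on all of `W`. -/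
theorem exists_partition (V W : Finset (DiscreteValuationOn L)) (hdisj : Disjoint V W) (N : ℤ) :
    ∃ e : L, (∀ v ∈ V, (N : WithTop ℤ) ≤ v.v (e - 1)) ∧
      (∀ w ∈ W, (N : WithTop ℤ) ≤ w.v e) := by
  classical
  have hmain : ∀ v ∈ V, ∃ e : L, (N : WithTop ℤ) ≤ v.v (e - 1) ∧
      ∀ u ∈ (V ∪ W).erase v, (N : WithTop ℤ) ≤ u.v e := by
    intro v hv
    exact exists_close ((V ∪ W).erase v) v (Finset.notMem_erase v _) N
  choose! E hE1 hE2 using hmain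
  refine ⟨∑ v ∈ V, E v, ?_, ?_⟩
  · intro v hv
    have hsplit : (∑ v' ∈ V, E v') - 1 = (E v - 1) + ∑ v' ∈ V.erase v, E v' := by
      rw [← Finset.add_sum_erase V E hv]; ring
    rw [hsplit]
    refine le_trans (le_min (hE1 v hv) (v.le_v_sum _ _ fun v' hv' => ?_))
      (v.min_le_map_add' _ _)
    have hv'mem : v ∈ (V ∪ W).erase v' := by
      rw [Finset.mem_erase]
      exact ⟨(Finset.ne_of_mem_erase hv').symm, Finset.mem_union_left _ hv⟩
    exact hE2 v' (Finset.mem_of_mem_erase hv') v hv'mem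
  · intro w hw
    refine w.le_v_sum _ _ fun v hv => ?_
    have hwmem : w ∈ (V ∪ W).erase v := by
      rw [Finset.mem_erase]
      refine ⟨fun h => ?_, Finset.mem_union_right _ hw⟩
      exact (Finset.disjoint_left.mp hdisj hv) (h ▸ hw)
    exact hE2 v hv w hwmem


/-- Lemma E: simultaneous approximation of `a` on `V` and `b` on `W`. -/
theorem exists_approx (V W : Finset (DiscreteValuationOn L)) (hdisj : Disjoint V W)
    (μV μW : DiscreteValuationOn L → ℤ) (a b : L) :
    ∃ x : L, (∀ v ∈ V, ((μV v : ℤ) : WithTop ℤ) ≤ v.v (x - a)) ∧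
      (∀ w ∈ W, ((μW w : ℤ) : WithTop ℤ) ≤ w.v (x - b)) := by
  classical
  by_cases hab : a = b
  · refine ⟨a, fun v _ => ?_, fun w _ => ?_⟩
    · rw [sub_self, v.map_zero']; exact le_top
    · rw [hab, sub_self, w.map_zero']; exact le_top
  · set d := a - b with hd
    have hd0 : d ≠ 0 := sub_ne_zero.mpr hab
    set dv : DiscreteValuationOn L → ℤ := fun v => WithTop.untopD 0 (v.v d) with hdv
    have hdvspec : ∀ v : DiscreteValuationOn L, v.v d = ((dv v : ℤ) : WithTop ℤ) := by
      intro v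
      obtain ⟨m, hm⟩ := v.exists_int hd0
      rw [hm, hdv]; simp [hm]
    set N : ℕ := (V.sup fun v => (μV v - dv v).toNat) ⊔ (W.sup fun w => (μW w - dv w).toNat)
      with hN
    have hNV : ∀ v ∈ V, μV v ≤ dv v + (N:ℤ) := by
      intro v hv
      have h1 : (μV v - dv v).toNat ≤ N :=
        le_trans (Finset.le_sup (f := fun v => (μV v - dv v).toNat) hv) le_sup_left
      have h2 := Int.self_le_toNat (μV v - dv v)
      have h3 : ((μV v - dv v).toNat : ℤ) ≤ (N:ℤ) := by exact_mod_cast h1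
      omega
    have hNW : ∀ w ∈ W, μW w ≤ dv w + (N:ℤ) := by
      intro w hw
      have h1 : (μW w - dv w).toNat ≤ N :=
        le_trans (Finset.le_sup (f := fun w => (μW w - dv w).toNat) hw) le_sup_right
      have h2 := Int.self_le_toNat (μW w - dv w)
      have h3 : ((μW w - dv w).toNat : ℤ) ≤ (N:ℤ) := by exact_mod_cast h1
      omega
    obtain ⟨e, he1, he2⟩ := exists_partition V W hdisj (N:ℤ)
    refine ⟨b + d * e, fun v hv => ?_, fun w hw => ?_⟩
    · have hxa : b + d * e - a = d * (e - 1) := by rw [hd]; ring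
      rw [hxa, v.map_mul', hdvspec v]
      calc ((μV v : ℤ) : WithTop ℤ) ≤ ((dv v + (N:ℤ) : ℤ) : WithTop ℤ) := by
            exact_mod_cast hNV v hv
        _ = ((dv v : ℤ) : WithTop ℤ) + (((N:ℤ) : ℤ) : WithTop ℤ) := by push_cast; rfl
        _ ≤ ((dv v : ℤ) : WithTop ℤ) + v.v (e - 1) := add_le_add le_rfl (he1 v hv)
    · have hxb : b + d * e - b = d * e := by ring
      rw [hxb, w.map_mul', hdvspec w]
      calc ((μW w : ℤ) : WithTop ℤ) ≤ ((dv w + (N:ℤ) : ℤ) : WithTop ℤ) := by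
            exact_mod_cast hNW w hw
        _ = ((dv w : ℤ) : WithTop ℤ) + (((N:ℤ) : ℤ) : WithTop ℤ) := by push_cast; rfl
        _ ≤ ((dv w : ℤ) : WithTop ℤ) + w.v e := add_le_add le_rfl (he2 w hw)

end DiscreteValuationOn

end Helpers

variable (L : Type*) [Field L]

/-- The ring `R_V = ⋂_{v ∈ V} R_v` associated to a finite set `V` of discrete
valuations of `L`, as a subring of `L`. -/
def ringOf (V : Finset (DiscreteValuationOn L)) : Subring L where
  carrier := {x : L | ∀ v ∈ V, (0 : WithTop ℤ) ≤ v.v x}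
  zero_mem' := fun v _ => by rw [v.map_zero']; exact le_top
  one_mem' := fun v _ => by rw [v.map_one']
  add_mem' := fun {a b} ha hb v hv =>
    le_trans (le_min (ha v hv) (hb v hv)) (v.min_le_map_add' a b)
  mul_mem' := fun {a b} ha hb v hv => by
    rw [v.map_mul']; exact add_nonneg (ha v hv) (hb v hv)
  neg_mem' := fun {a} ha v hv => by rw [v.map_neg' a]; exact ha v hv

/-- The ideal `I_V = ⋂_{v ∈ V} m_v^{μ(v)}` associated to a finite set `V` of discrete
valuations of `L` with multiplicity function `μ`, as an ideal of `R_V`. -/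
def idealOf (V : Finset (DiscreteValuationOn L)) (μ : DiscreteValuationOn L → ℤ) :
    Ideal (ringOf L V) where
  carrier := {x : ringOf L V | ∀ v ∈ V, ((μ v : WithTop ℤ)) ≤ v.v (x : L)}
  zero_mem' := fun v _ => by
    show ((μ v : WithTop ℤ)) ≤ v.v (0 : L)
    rw [v.map_zero']; exact le_top
  add_mem' := fun {a b} ha hb v hv =>
    le_trans (le_min (ha v hv) (hb v hv)) (v.min_le_map_add' (a : L) (b : L))
  smul_mem' := fun c x hx v hv => by
    show ((μ v : WithTop ℤ)) ≤ v.v ((c : L) * (x : L))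
    rw [v.map_mul']
    calc ((μ v : WithTop ℤ)) = 0 + (μ v : WithTop ℤ) := (zero_add _).symm
      _ ≤ v.v (c : L) + v.v (x : L) := add_le_add (c.2 v hv) (hx v hv)

/-- The ideal `I_V ∩ I_W`, as an ideal of `R_V ∩ R_W`. -/
def idealBoth (V W : Finset (DiscreteValuationOn L))
    (μV μW : DiscreteValuationOn L → ℤ) :
    Ideal ((ringOf L V ⊓ ringOf L W : Subring L)) where
  carrier := {x | (∀ v ∈ V, ((μV v : WithTop ℤ)) ≤ v.v (x : L)) ∧
    (∀ w ∈ W, ((μW w : WithTop ℤ)) ≤ w.v (x : L))}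
  zero_mem' := by
    constructor
    · intro v _; show ((μV v : WithTop ℤ)) ≤ v.v (0 : L); rw [v.map_zero']; exact le_top
    · intro w _; show ((μW w : WithTop ℤ)) ≤ w.v (0 : L); rw [w.map_zero']; exact le_top
  add_mem' := fun {a b} ha hb =>
    ⟨fun v hv => le_trans (le_min (ha.1 v hv) (hb.1 v hv)) (v.min_le_map_add' (a : L) (b : L)),
     fun w hw => le_trans (le_min (ha.2 w hw) (hb.2 w hw)) (w.min_le_map_add' (a : L) (b : L))⟩
  smul_mem' := fun c x hx => by
    constructor
    · intro v hv
      show ((μV v : WithTop ℤ)) ≤ v.v ((c : L) * (x : L))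
      rw [v.map_mul']
      calc ((μV v : WithTop ℤ)) = 0 + (μV v : WithTop ℤ) := (zero_add _).symm
        _ ≤ v.v (c : L) + v.v (x : L) :=
          add_le_add ((Subring.mem_inf.mp c.2).1 v hv) (hx.1 v hv)
    · intro w hw
      show ((μW w : WithTop ℤ)) ≤ w.v ((c : L) * (x : L))
      rw [w.map_mul']
      calc ((μW w : WithTop ℤ)) = 0 + (μW w : WithTop ℤ) := (zero_add _).symm
        _ ≤ w.v (c : L) + w.v (x : L) :=
          add_le_add ((Subring.mem_inf.mp c.2).2 w hw) (hx.2 w hw)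

set_option maxHeartbeats 1000000 in
set_option synthInstance.maxHeartbeats 400000 in
/-- **DVR remainder theorem.**  Let `L` be a field, and let `V` and `W` be nonempty finite
disjoint sets of discrete valuations of `L`, with positive multiplicity functions `μV, μW`.
Then the natural map induces a ring isomorphism
`(R_V ∩ R_W)/(I_V ∩ I_W) ≅ (R_V/I_V) × (R_W/I_W)`. -/
theorem dvr_remainder_theorem
    (V W : Finset (DiscreteValuationOn L)) (hV : V.Nonempty) (hW : W.Nonempty)
    (hdisj : Disjoint V W)
    (μV μW : DiscreteValuationOn L → ℤ)
    (hμV : ∀ v ∈ V, 0 < μV v) (hμW : ∀ w ∈ W, 0 < μW w) :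
    ∃ e : ((ringOf L V ⊓ ringOf L W : Subring L) ⧸ idealBoth L V W μV μW) ≃+*
        ((ringOf L V ⧸ idealOf L V μV) × (ringOf L W ⧸ idealOf L W μW)),
      ∀ x : (ringOf L V ⊓ ringOf L W : Subring L),
        e (Ideal.Quotient.mk (idealBoth L V W μV μW) x) =
          (Ideal.Quotient.mk (idealOf L V μV) ⟨(x : L), (Subring.mem_inf.mp x.2).1⟩,
           Ideal.Quotient.mk (idealOf L W μW) ⟨(x : L), (Subring.mem_inf.mp x.2).2⟩) := by
    classical
  set f : ((ringOf L V ⊓ ringOf L W : Subring L)) →+*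
      ((ringOf L V ⧸ idealOf L V μV) × (ringOf L W ⧸ idealOf L W μW)) :=
    RingHom.prod
      ((Ideal.Quotient.mk (idealOf L V μV)).comp (Subring.inclusion inf_le_left))
      ((Ideal.Quotient.mk (idealOf L W μW)).comp (Subring.inclusion inf_le_right)) with hf
  have hfx : ∀ x : (ringOf L V ⊓ ringOf L W : Subring L),
      f x = (Ideal.Quotient.mk (idealOf L V μV) ⟨(x : L), (Subring.mem_inf.mp x.2).1⟩,
             Ideal.Quotient.mk (idealOf L W μW) ⟨(x : L), (Subring.mem_inf.mp x.2).2⟩) :=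
    fun x => rfl
  have hker : ∀ x, f x = 0 ↔ x ∈ idealBoth L V W μV μW := by
    intro x
    rw [hfx x, Prod.mk_eq_zero, Ideal.Quotient.eq_zero_iff_mem, Ideal.Quotient.eq_zero_iff_mem]
    exact Iff.rfl
  have hsurj : Function.Surjective f := by
    rintro ⟨ya, yb⟩
    obtain ⟨a, rfl⟩ := Ideal.Quotient.mk_surjective ya
    obtain ⟨b, rfl⟩ := Ideal.Quotient.mk_surjective yb
    obtain ⟨x, hxa, hxb⟩ :=
      DiscreteValuationOn.exists_approx V W hdisj μV μW (a : L) (b : L)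
    have hxV : x ∈ ringOf L V := by
      intro v hv
      have h1 : (0 : WithTop ℤ) ≤ v.v (x - (a : L)) :=
        le_trans (by exact_mod_cast (hμV v hv).le) (hxa v hv)
      have h2 : (0 : WithTop ℤ) ≤ v.v (a : L) := a.2 v hv
      have hx : x = (x - (a : L)) + (a : L) := by ring
      rw [hx]
      exact le_trans (le_min h1 h2) (v.min_le_map_add' _ _)
    have hxW : x ∈ ringOf L W := by
      intro w hw
      have h1 : (0 : WithTop ℤ) ≤ w.v (x - (b : L)) :=
        le_trans (by exact_mod_cast (hμW w hw).le) (hxb w hw)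
      have h2 : (0 : WithTop ℤ) ≤ w.v (b : L) := b.2 w hw
      have hx : x = (x - (b : L)) + (b : L) := by ring
      rw [hx]
      exact le_trans (le_min h1 h2) (w.min_le_map_add' _ _)
    refine ⟨⟨x, Subring.mem_inf.mpr ⟨hxV, hxW⟩⟩, ?_⟩
    rw [hfx]
    refine Prod.ext ?_ ?_
    · rw [Ideal.Quotient.mk_eq_mk_iff_sub_mem]
      exact fun v hv => hxa v hv
    · rw [Ideal.Quotient.mk_eq_mk_iff_sub_mem]
      exact fun w hw => hxb w hw
  have hmem : ∀ y ∈ idealBoth L V W μV μW, f y = 0 := fun y hy => (hker y).mpr hy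
  set F := Ideal.Quotient.lift (idealBoth L V W μV μW) f hmem with hF
  have hFmk : ∀ x, F (Ideal.Quotient.mk (idealBoth L V W μV μW) x) = f x :=
    fun x => Ideal.Quotient.lift_mk _ _ _
  have hFinj : Function.Injective F := by
    intro q1 q2 h
    obtain ⟨x1, rfl⟩ := Ideal.Quotient.mk_surjective q1
    obtain ⟨x2, rfl⟩ := Ideal.Quotient.mk_surjective q2
    rw [hFmk, hFmk] at h
    rw [Ideal.Quotient.mk_eq_mk_iff_sub_mem]
    exact (hker _).mp (by rw [f.map_sub, h, sub_self])
  have hFsurj : Function.Surjective F := by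
    intro y
    obtain ⟨x, hx⟩ := hsurj y
    exact ⟨Ideal.Quotient.mk _ x, by rw [hFmk, hx]⟩
  refine ⟨RingEquiv.ofBijective F ⟨hFinj, hFsurj⟩, fun x => ?_⟩
  show F (Ideal.Quotient.mk (idealBoth L V W μV μW) x) = _
  rw [hFmk, hfx]
end

section
/- Let R be a Dedekind domain that is not a field, and suppose that R/I is finite for every nonzero ideal I of R. Then for every nonzero proper ideal I of R, the cardinality of the unit group of R/I satisfies #(R/I)^× = #(R/I) · ∏_{P} (1 − 1/#(R/P)), where the product runs over the (finitely many) prime ideals P of R containing I; equivalently, #(R/I)^× · ∏_P #(R/P) = #(R/I) · ∏_P (#(R/P) − 1). -/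
open UniqueFactorizationMonoid

/-- Units of a pi monoid. -/
@[simps]
def myPiUnits {ι : Type*} {M : ι → Type*} [∀ i, Monoid (M i)] :
    (∀ i, M i)ˣ ≃* ∀ i, (M i)ˣ where
  toFun u i := ⟨u.val i, u.inv i, congrFun u.val_inv i, congrFun u.inv_val i⟩
  invFun f := ⟨fun i => (f i).val, fun i => (f i).inv,
    funext fun i => (f i).val_inv, funext fun i => (f i).inv_val⟩
  left_inv u := by ext i; rfl
  right_inv f := by ext i; rfl
  map_mul' u v := rfl

lemma units_card_eq {A : Type*} [CommRing A] [Finite A] (m : Ideal A)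
    (hm : ∀ x : A, IsUnit x ↔ x ∉ m) :
    Nat.card Aˣ = Nat.card A - Nat.card m := by
  classical
  have : Fintype A := Fintype.ofFinite A
  have e1 : Aˣ ≃ {x : A // IsUnit x} :=
    ⟨fun u => ⟨u, u.isUnit⟩, fun x => x.2.unit, fun u => Units.ext rfl,
     fun x => Subtype.ext x.2.unit_spec⟩
  have e2 : {x : A // IsUnit x} ≃ {x : A // x ∉ m} :=
    Equiv.subtypeEquivRight hm
  rw [Nat.card_congr (e1.trans e2)]
  simp only [Nat.card_eq_fintype_card]
  rw [Fintype.card_subtype_compl (fun x => x ∈ m)]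

lemma isUnit_quotient_pow_iff {R : Type*} [CommRing R] [IsDomain R] [IsDedekindDomain R]
    (P : Ideal R) (hP : P ≠ ⊥) [hPp : P.IsPrime] (e : ℕ) (he : e ≠ 0) (r : R) :
    IsUnit (Ideal.Quotient.mk (P ^ e) r) ↔ r ∉ P := by
  constructor
  · rintro ⟨u, hu⟩ hr
    obtain ⟨s, hs⟩ := Ideal.Quotient.mk_surjective (↑u⁻¹ : R ⧸ P ^ e)
    have : Ideal.Quotient.mk (P ^ e) (r * s) = 1 := by
      rw [map_mul, ← hu, hs, Units.mul_inv]
    have h1 : r * s - 1 ∈ P ^ e :=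
      Ideal.Quotient.eq.mp (this.trans (map_one (Ideal.Quotient.mk (P ^ e))).symm)
    have h1' : r * s - 1 ∈ P := (Ideal.pow_le_self he) h1
    have : (1 : R) ∈ P := by
      have := P.sub_mem (P.mul_mem_right s hr) h1'
      simpa using this
    exact hPp.ne_top (Ideal.eq_top_iff_one P |>.mpr this)
  · intro hr
    have hmax : P.IsMaximal := Ideal.IsPrime.isMaximal hPp hP
    have htop : Ideal.span {r} ⊔ P ^ e = ⊤ := by
      by_contra h
      obtain ⟨Q, hQmax, hQ⟩ := Ideal.exists_le_maximal _ h
      have hPQ : P ^ e ≤ Q := le_trans le_sup_right hQ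
      have hPQ' : P ≤ Q := (Ideal.IsPrime.pow_le_iff he).mp hPQ
      have hPQeq : P = Q := hmax.eq_of_le hQmax.ne_top hPQ'
      have hrQ : r ∈ Q := (le_trans le_sup_left hQ) (Ideal.mem_span_singleton_self r)
      exact hr (hPQeq ▸ hrQ)
    obtain ⟨a, ha, b, hb, hab⟩ := Submodule.mem_sup.mp
      ((Ideal.eq_top_iff_one _).mp htop)
    obtain ⟨c, rfl⟩ := Ideal.mem_span_singleton'.mp ha
    refine IsUnit.of_mul_eq_one (Ideal.Quotient.mk (P ^ e) c) ?_
    rw [← map_mul, show (1 : R ⧸ P ^ e) = Ideal.Quotient.mk (P ^ e) 1 from (map_one _).symm]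
    refine Ideal.Quotient.eq.mpr ?_
    have : r * c - 1 = -b := by linear_combination hab
    rw [this]
    exact neg_mem hb

lemma local_formula {R : Type*} [CommRing R] [IsDomain R] [IsDedekindDomain R]
    (P : Ideal R) (hP : P ≠ ⊥) [hPp : P.IsPrime] (e : ℕ) (he : e ≠ 0)
    [Finite (R ⧸ P ^ e)] [Finite (R ⧸ P)] :
    Nat.card ((R ⧸ P ^ e)ˣ) * Nat.card (R ⧸ P) =
      Nat.card (R ⧸ P ^ e) * (Nat.card (R ⧸ P) - 1) := by
  set m : Ideal (R ⧸ P ^ e) := P.map (Ideal.Quotient.mk (P ^ e)) with hm_def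
  have hle : P ^ e ≤ P := Ideal.pow_le_self he
  have hm : ∀ x : R ⧸ P ^ e, IsUnit x ↔ x ∉ m := by
    intro x
    obtain ⟨r, rfl⟩ := Ideal.Quotient.mk_surjective x
    rw [isUnit_quotient_pow_iff P hP e he r, hm_def, Ideal.mem_quotient_iff_mem hle]
  have hcard := units_card_eq m hm
  have hquot : Nat.card (R ⧸ P ^ e) = Nat.card m * Nat.card ((R ⧸ P ^ e) ⧸ m) :=
    Submodule.card_eq_card_quotient_mul_card m
  have hAm : Nat.card ((R ⧸ P ^ e) ⧸ m) = Nat.card (R ⧸ P) :=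
    Nat.card_congr (DoubleQuot.quotQuotEquivQuotOfLE hle).toEquiv
  rw [hAm] at hquot
  set q := Nat.card (R ⧸ P) with hq_def
  set k := Nat.card m with hk_def
  rw [hcard, hquot]
  have : k * q - k = k * (q - 1) := by
    rw [Nat.mul_sub, mul_one]
  rw [this]
  ring



/-- **Product formula for a Dedekind domain.**  Let `R` be a Dedekind domain that is not a
field, with finite quotients by nonzero ideals.  For every nonzero proper ideal `I`, if `S`
is the (finite) set of prime ideals of `R` containing `I`, then
`#(R/I)ˣ · ∏_{P ∈ S} #(R/P) = #(R/I) · ∏_{P ∈ S} (#(R/P) − 1)`,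
i.e. `#(R/I)ˣ = #(R/I) · ∏_{P ∈ S} (1 − 1/#(R/P))`. -/
theorem card_units_quotient_product_formula
    (R : Type*) [CommRing R] [IsDomain R] [IsDedekindDomain R] (hR : ¬ IsField R)
    (hfin : ∀ I : Ideal R, I ≠ ⊥ → Finite (R ⧸ I))
    (I : Ideal R) (hI : I ≠ ⊥) (hItop : I ≠ ⊤)
    (S : Finset (Ideal R)) (hS : ∀ P : Ideal R, P ∈ S ↔ P.IsPrime ∧ I ≤ P) :
    Nat.card ((R ⧸ I)ˣ) * ∏ P ∈ S, Nat.card (R ⧸ P) =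
      Nat.card (R ⧸ I) * ∏ P ∈ S, (Nat.card (R ⧸ P) - 1) := by
  classical
  have hST : S = (normalizedFactors I).toFinset := by
    ext P
    rw [hS, Multiset.mem_toFinset, Ideal.mem_normalizedFactors_iff hI]
  set e : Ideal R → ℕ := fun P => (normalizedFactors I).count P with he_def
  have hprime : ∀ P ∈ S, Prime P := by
    intro P hP
    rw [hS] at hP
    have hPbot : P ≠ ⊥ := fun h => hI (le_bot_iff.mp (h ▸ hP.2))
    exact (Ideal.prime_iff_isPrime hPbot).mpr hP.1
  have hPbot : ∀ P ∈ S, P ≠ ⊥ := fun P hP => (hprime P hP).ne_zero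
  have hprod : ∏ P ∈ S, P ^ e P = I := by
    rw [hST, ← Finset.prod_multiset_count]
    exact associated_iff_eq.mp (prod_normalizedFactors hI)
  have hfinI : Finite (R ⧸ I) := hfin I hI
  have hfinPe : ∀ P : S, Finite (R ⧸ (P : Ideal R) ^ e (P : Ideal R)) := fun P =>
    hfin _ (pow_ne_zero _ (hPbot P P.2))
  have hfinP : ∀ P ∈ S, Finite (R ⧸ P) := fun P hP => hfin P (hPbot P hP)
  let f : R ⧸ I ≃+* ∀ P : S, R ⧸ (P : Ideal R) ^ e (P : Ideal R) :=
    IsDedekindDomain.quotientEquivPiOfFinsetProdEq I (fun P => P) e hprime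
      (fun i _ j _ h => h) hprod
  haveI := hfinPe
  have card1 : Nat.card (R ⧸ I) = ∏ P ∈ S, Nat.card (R ⧸ P ^ e P) := by
    rw [Nat.card_congr f.toEquiv, Nat.card_pi,
      Finset.prod_coe_sort S (fun P => Nat.card (R ⧸ P ^ e P))]
  have card2 : Nat.card ((R ⧸ I)ˣ) = ∏ P ∈ S, Nat.card ((R ⧸ P ^ e P)ˣ) := by
    rw [Nat.card_congr ((Units.mapEquiv f.toMulEquiv).trans myPiUnits).toEquiv,
      Nat.card_pi, Finset.prod_coe_sort S (fun P => Nat.card ((R ⧸ P ^ e P)ˣ))]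
  rw [card1, card2, ← Finset.prod_mul_distrib, ← Finset.prod_mul_distrib]
  refine Finset.prod_congr rfl fun P hP => ?_
  haveI : P.IsPrime := ((hS P).mp hP).1
  haveI : Finite (R ⧸ P ^ e P) := hfin _ (pow_ne_zero _ (hPbot P hP))
  haveI : Finite (R ⧸ P) := hfinP P hP
  have heP : e P ≠ 0 := by
    rw [he_def]
    simp only []
    exact Multiset.count_ne_zero.mpr (Multiset.mem_toFinset.mp (hST ▸ hP))
  exact local_formula P (hPbot P hP) (e P) heP
end

section
/- Let K be a number field with ring of integers O_K. For a complex number s and a nonzero prime ideal P of O_K, set F_P(s) = 1 + (N(P)−1)^{−s} − N(P)^{−s} (principal-branch complex powers). Then for every s with Re(s) > 0 the family (F_P(s))_P indexed by the nonzero prime ideals of O_K is multipliable, and the function f_K(s) = ∏_P F_P(s) is holomorphic (complex differentiable) on the open half-plane {s : Re(s) > 0}. -/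
open NumberField Complex

namespace EulerAux

variable (K : Type*) [Field K] [NumberField K]

lemma card_eq (P : {P : Ideal (𝓞 K) // P.IsPrime ∧ P ≠ ⊥}) :
    Nat.card (𝓞 K ⧸ P.1) = Ideal.absNorm P.1 := by
  rw [Ideal.absNorm_apply, Submodule.cardQuot_apply]

lemma two_le_norm (P : {P : Ideal (𝓞 K) // P.IsPrime ∧ P ≠ ⊥}) :
    2 ≤ Ideal.absNorm P.1 := by
  have hfin : Finite (𝓞 K ⧸ P.1) :=
    Ideal.finiteQuotientOfFreeOfNeBot _ P.2.2
  have h0 : Ideal.absNorm P.1 ≠ 0 := (Ideal.absNorm_ne_zero_iff _).mpr hfin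
  have h1 : Ideal.absNorm P.1 ≠ 1 := by
    rw [Ne, Ideal.absNorm_eq_one_iff]
    exact P.2.1.ne_top
  omega

lemma card_le_finrank (n : ℕ) (hn : 2 ≤ n)
    (v : Finset {P : Ideal (𝓞 K) // P.IsPrime ∧ P ≠ ⊥})
    (hv : ∀ P ∈ v, Ideal.absNorm P.1 = n) :
    v.card ≤ Module.finrank ℤ (𝓞 K) := by
  classical
  set d := Module.finrank ℤ (𝓞 K) with hd
  have hdvd1 : (∏ P ∈ v, P.1) ∣ Ideal.span {(n : 𝓞 K)} := by
    refine Finset.prod_dvd_of_coprime ?_ ?_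
    · intro P hP Q hQ hne
      have h1 : P.1.IsMaximal := P.2.1.isMaximal P.2.2
      have h2 : Q.1.IsMaximal := Q.2.1.isMaximal Q.2.2
      exact (Ideal.isCoprime_iff_sup_eq).mpr
        (h1.coprime_of_ne h2 (fun h => hne (Subtype.ext h)))
    · intro P hP
      rw [Ideal.dvd_iff_le, Ideal.span_singleton_le_iff_mem]
      have := Ideal.absNorm_mem P.1
      rwa [hv P hP] at this
  have hspan : Ideal.absNorm (Ideal.span {(n : 𝓞 K)}) = n ^ d := by
    rw [Ideal.absNorm_span_singleton]
    have h : (n : 𝓞 K) = algebraMap ℤ (𝓞 K) (n : ℤ) := by simp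
    rw [h, Algebra.norm_algebraMap_of_basis (Module.Free.chooseBasis ℤ (𝓞 K))]
    rw [Int.natAbs_pow, Int.natAbs_natCast, hd, Module.finrank_eq_card_chooseBasisIndex]
  have h3 := Ideal.absNorm_dvd_absNorm_of_le (Ideal.dvd_iff_le.mp hdvd1)
  rw [hspan, map_prod] at h3
  have h4 : ∏ P ∈ v, Ideal.absNorm P.1 = n ^ v.card := by
    rw [Finset.prod_congr rfl hv, Finset.prod_const]
  rw [h4] at h3
  exact (Nat.pow_dvd_pow_iff_le_right (by omega : 1 < n)).mp h3


lemma summable_rpow (x : ℝ) (hx : x < -1) :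
    Summable (fun P : {P : Ideal (𝓞 K) // P.IsPrime ∧ P ≠ ⊥} =>
      (Nat.card (𝓞 K ⧸ P.1) : ℝ) ^ x) := by
  classical
  set d := Module.finrank ℤ (𝓞 K) with hd
  have hsum : Summable (fun n : ℕ => (n : ℝ) ^ x) := Real.summable_nat_rpow.mpr hx
  have hnn : ∀ n : ℕ, 0 ≤ (n : ℝ) ^ x := fun n => Real.rpow_nonneg (Nat.cast_nonneg n) x
  refine summable_of_sum_le (c := d * ∑' n : ℕ, (n : ℝ) ^ x)
    (fun P => Real.rpow_nonneg (Nat.cast_nonneg _) x) (fun u => ?_)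
  have hcomp := Finset.sum_comp (s := u) (fun n : ℕ => (n : ℝ) ^ x)
    (fun P : {P : Ideal (𝓞 K) // P.IsPrime ∧ P ≠ ⊥} => Ideal.absNorm P.1)
  have h1 : ∑ P ∈ u, (Nat.card (𝓞 K ⧸ P.1) : ℝ) ^ x
      = ∑ P ∈ u, (fun n : ℕ => (n : ℝ) ^ x) (Ideal.absNorm P.1) :=
    Finset.sum_congr rfl fun P _ => by rw [card_eq]
  rw [h1, hcomp]
  calc ∑ n ∈ u.image (fun P => Ideal.absNorm P.1),
          (u.filter fun P => Ideal.absNorm P.1 = n).card • ((n : ℝ) ^ x)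
      ≤ ∑ n ∈ u.image (fun P => Ideal.absNorm P.1), (d : ℝ) * ((n : ℝ) ^ x) := by
        refine Finset.sum_le_sum fun n hn => ?_
        rw [nsmul_eq_mul]
        refine mul_le_mul_of_nonneg_right ?_ (hnn n)
        obtain ⟨P, hP, rfl⟩ := Finset.mem_image.mp hn
        have h2n : 2 ≤ Ideal.absNorm P.1 := two_le_norm K P
        exact_mod_cast card_le_finrank K _ h2n _
          (fun Q hQ => (Finset.mem_filter.mp hQ).2)
    _ = (d : ℝ) * ∑ n ∈ u.image (fun P => Ideal.absNorm P.1), (n : ℝ) ^ x := by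
        rw [Finset.mul_sum]
    _ ≤ (d : ℝ) * ∑' n : ℕ, (n : ℝ) ^ x := by
        refine mul_le_mul_of_nonneg_left ?_ (Nat.cast_nonneg d)
        exact Summable.sum_le_tsum _ (fun n _ => hnn n) hsum

lemma finite_bad (C δ : ℝ) (hδ : 0 ≤ δ) :
    {P : {P : Ideal (𝓞 K) // P.IsPrime ∧ P ≠ ⊥} |
      ¬ C * (Nat.card (𝓞 K ⧸ P.1) : ℝ) ^ (-1 - δ) ≤ 1/2}.Finite := by
  have hfin : {I : Ideal (𝓞 K) | Ideal.absNorm I ≤ ⌈2 * C⌉₊}.Finite :=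
    Ideal.finite_setOf_absNorm_le _
  refine Set.Finite.subset (hfin.preimage (Set.injOn_of_injective Subtype.val_injective))
    (fun P hP => ?_)
  simp only [Set.mem_setOf_eq, not_le] at hP
  simp only [Set.mem_preimage, Set.mem_setOf_eq]
  rw [← card_eq]
  set n : ℕ := Nat.card (𝓞 K ⧸ P.1) with hn
  have h2 : 2 ≤ n := by rw [hn, card_eq]; exact two_le_norm K P
  have hn1 : (1:ℝ) ≤ n := by exact_mod_cast h2.trans' (by norm_num)
  have hn0 : (0:ℝ) < n := by linarith
  have hrpos : (0:ℝ) < (n : ℝ) ^ (-1 - δ : ℝ) := Real.rpow_pos_of_pos hn0 _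
  have hC : 0 < C := by nlinarith
  have hpow : (n : ℝ) ^ (-1 - δ : ℝ) ≤ (n : ℝ)⁻¹ := by
    rw [← Real.rpow_neg_one (n : ℝ)]
    exact Real.rpow_le_rpow_of_exponent_le hn1 (by linarith)
  have h3 : 1/2 < C * (n:ℝ)⁻¹ := lt_of_lt_of_le hP (by nlinarith)
  have h4 : (n : ℝ) ≤ 2 * C := by
    nlinarith [mul_lt_mul_of_pos_right h3 hn0, inv_mul_cancel₀ (ne_of_gt hn0)]
  calc n ≤ ⌈(n : ℝ)⌉₊ := by rw [Nat.ceil_natCast]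
    _ ≤ ⌈2 * C⌉₊ := Nat.ceil_le_ceil h4

lemma key_bound {R : ℝ} {s : ℂ} (hs : ‖s‖ ≤ R) {n : ℕ} (hn : 2 ≤ n) :
    ‖((n : ℂ) - 1) ^ (-s) - (n : ℂ) ^ (-s)‖
      ≤ 4 * (R + 1) * Real.exp R * (n : ℝ) ^ (-1 - s.re) := by
  have hR0 : 0 ≤ R := le_trans (norm_nonneg s) hs
  set a : ℝ := (n : ℝ) - 1 with hadef
  set b : ℝ := (n : ℝ) with hbdef
  have hb2 : (2:ℝ) ≤ b := by rw [hbdef]; exact_mod_cast hn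
  have ha1 : (1:ℝ) ≤ a := by rw [hadef]; linarith
  have ha0 : (0:ℝ) < a := by linarith
  have hb0 : (0:ℝ) < b := by linarith
  set La : ℝ := Real.log a with hLa
  set Lb : ℝ := Real.log b with hLb
  have hab : a ≤ b := by simp only [hadef, hbdef]; linarith
  have hLab : La ≤ Lb := Real.log_le_log ha0 hab
  have hca : ((n : ℂ) - 1) = (a : ℂ) := by rw [hadef, hbdef]; push_cast; ring
  have hcb : (n : ℂ) = (b : ℂ) := by rw [hbdef]; norm_cast
  have hcp1 : ((a : ℂ)) ^ (-s) = Complex.exp (-s * (La : ℂ)) := by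
    rw [Complex.cpow_def_of_ne_zero (by exact_mod_cast ne_of_gt ha0),
      ← Complex.ofReal_log ha0.le, mul_comm]
  have hcp2 : ((b : ℂ)) ^ (-s) = Complex.exp (-s * (Lb : ℂ)) := by
    rw [Complex.cpow_def_of_ne_zero (by exact_mod_cast ne_of_gt hb0),
      ← Complex.ofReal_log hb0.le, mul_comm]
  set w : ℂ := s * ((Lb : ℂ) - (La : ℂ)) with hw
  have hfact : Complex.exp (-s * (La : ℂ)) - Complex.exp (-s * (Lb : ℂ))
      = Complex.exp (-s * (Lb : ℂ)) * (Complex.exp w - 1) := by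
    rw [mul_sub, mul_one, ← Complex.exp_add]
    congr 2
    rw [hw]; ring
  -- bound on Lb - La
  have hLba : Lb - La ≤ 2 / b := by
    have h1 : Lb - La = Real.log (b / a) := (Real.log_div (ne_of_gt hb0) (ne_of_gt ha0)).symm
    have h2 : Real.log (b / a) ≤ b / a - 1 :=
      Real.log_le_sub_one_of_pos (div_pos hb0 ha0)
    have h3 : b / a - 1 = 1 / a := by
      field_simp
      simp only [hadef]; ring
    have h4 : 1 / a ≤ 2 / b := by
      rw [div_le_div_iff₀ ha0 hb0]
      simp only [hadef]; linarith
    rw [h1]; linarith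
  have hLba0 : 0 ≤ Lb - La := by linarith
  have hwnorm : ‖w‖ ≤ ‖s‖ * (Lb - La) := by
    rw [hw]
    have : ((Lb : ℂ) - (La : ℂ)) = ((Lb - La : ℝ) : ℂ) := by push_cast; ring
    rw [this, norm_mul, Complex.norm_real, Real.norm_of_nonneg hLba0]
  have hwle : ‖w‖ ≤ 2 * ‖s‖ / b := by
    refine le_trans hwnorm ?_
    rw [div_eq_mul_inv]
    have := mul_le_mul_of_nonneg_left hLba (norm_nonneg s)
    calc ‖s‖ * (Lb - La) ≤ ‖s‖ * (2 / b) := this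
      _ = 2 * ‖s‖ * b⁻¹ := by ring
  have hwR : ‖w‖ ≤ R := by
    refine le_trans hwle (le_trans ?_ hs)
    rw [div_le_iff₀ hb0]
    nlinarith [norm_nonneg s]
  -- bound ‖exp w - 1‖ ≤ 4 (R+1) e^R / b
  have hexp1 : Real.exp ‖w‖ ≤ Real.exp R := Real.exp_le_exp.mpr hwR
  have hexpR1 : (1:ℝ) ≤ Real.exp R := Real.one_le_exp hR0
  have hmain : ‖Complex.exp w - 1‖ ≤ 4 * (R + 1) * Real.exp R / b := by
    rcases le_or_gt ‖w‖ 1 with h1 | h1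
    · have hb1 := Complex.norm_exp_sub_one_le (x := w) h1
      have h2 : ‖Complex.exp w - 1‖ ≤ 2 * (2 * ‖s‖ / b) := by
        have h2' := mul_le_mul_of_nonneg_left hwle (by norm_num : (0:ℝ) ≤ 2)
        linarith
      refine le_trans h2 ?_
      have he : 2 * (2 * ‖s‖ / b) = 4 * ‖s‖ / b := by ring
      rw [he, div_le_div_iff_of_pos_right hb0]
      nlinarith [norm_nonneg s]
    · have hne : ‖Complex.exp w - 1‖ ≤ Real.exp R + 1 := by
        refine le_trans (norm_sub_le _ _) ?_
        rw [norm_one, Complex.norm_exp]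
        have : w.re ≤ ‖w‖ := Complex.re_le_norm w
        have := Real.exp_le_exp.mpr (le_trans this hwR)
        linarith
      have h3 : Real.exp R + 1 ≤ 2 * Real.exp R := by linarith
      have h4 : (2 : ℝ) * Real.exp R ≤ 2 * Real.exp R * ‖w‖ := by
        nlinarith [Real.exp_pos R]
      have h5 : 2 * Real.exp R * ‖w‖ ≤ 2 * Real.exp R * (2 * ‖s‖ / b) := by
        refine mul_le_mul_of_nonneg_left hwle (by positivity)
      refine le_trans hne (le_trans h3 (le_trans h4 (le_trans h5 ?_)))
      have he : 2 * Real.exp R * (2 * ‖s‖ / b) = 4 * ‖s‖ * Real.exp R / b := by ring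
      rw [he, div_le_div_iff_of_pos_right hb0]
      nlinarith [Real.exp_pos R, norm_nonneg s]
  -- assemble
  have hnormb : ‖Complex.exp (-s * (Lb : ℂ))‖ = b ^ (-s.re) := by
    rw [Complex.norm_exp, Real.rpow_def_of_pos hb0]
    congr 1
    simp [Complex.mul_re]
    ring
  have hsplit : (n : ℝ) ^ (-1 - s.re) = b ^ (-s.re) * b⁻¹ := by
    rw [← hbdef, show (-1 - s.re) = -s.re + (-1) by ring, Real.rpow_add hb0,
      Real.rpow_neg_one]
  rw [hca, hcb, hcp1, hcp2, hfact, norm_mul, hnormb, hsplit]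
  have hbpow : (0:ℝ) ≤ b ^ (-s.re) := (Real.rpow_pos_of_pos hb0 _).le
  calc b ^ (-s.re) * ‖Complex.exp w - 1‖
      ≤ b ^ (-s.re) * (4 * (R + 1) * Real.exp R / b) :=
        mul_le_mul_of_nonneg_left hmain hbpow
    _ = 4 * (R + 1) * Real.exp R * (b ^ (-s.re) * b⁻¹) := by ring

lemma tail_hasProd (s : ℂ) (T : Set {P : Ideal (𝓞 K) // P.IsPrime ∧ P ≠ ⊥})
    (u : {P : Ideal (𝓞 K) // P.IsPrime ∧ P ≠ ⊥} → ℝ) (hsum : Summable u)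
    (hu : ∀ P : {P : Ideal (𝓞 K) // P.IsPrime ∧ P ≠ ⊥},
      ‖((Nat.card (𝓞 K ⧸ P.1) : ℂ) - 1) ^ (-s) - (Nat.card (𝓞 K ⧸ P.1) : ℂ) ^ (-s)‖ ≤ u P)
    (h12 : ∀ P ∉ T, u P ≤ 1/2) :
    HasProd (fun P : ↥(Tᶜ) =>
        1 + ((Nat.card (𝓞 K ⧸ P.1.1) : ℂ) - 1) ^ (-s) - (Nat.card (𝓞 K ⧸ P.1.1) : ℂ) ^ (-s))
      (Complex.exp (∑' P : ↥(Tᶜ), Complex.log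
        (1 + ((Nat.card (𝓞 K ⧸ P.1.1) : ℂ) - 1) ^ (-s) - (Nat.card (𝓞 K ⧸ P.1.1) : ℂ) ^ (-s)))) := by
  set z : {P : Ideal (𝓞 K) // P.IsPrime ∧ P ≠ ⊥} → ℂ := fun P =>
    ((Nat.card (𝓞 K ⧸ P.1) : ℂ) - 1) ^ (-s) - (Nat.card (𝓞 K ⧸ P.1) : ℂ) ^ (-s) with hz
  have hzeq : ∀ P : {P : Ideal (𝓞 K) // P.IsPrime ∧ P ≠ ⊥},
      1 + ((Nat.card (𝓞 K ⧸ P.1) : ℂ) - 1) ^ (-s) - (Nat.card (𝓞 K ⧸ P.1) : ℂ) ^ (-s)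
        = 1 + z P := fun P => add_sub_assoc _ _ _
  simp only [hzeq]
  have hz12 : ∀ P : ↥(Tᶜ), ‖z P.1‖ ≤ 1/2 := fun P => (hu P.1).trans (h12 P.1 P.2)
  have hne : ∀ P : ↥(Tᶜ), (1 : ℂ) + z P.1 ≠ 0 := by
    intro P h
    have h1 := hz12 P
    rw [show z P.1 = -1 by linear_combination h] at h1
    norm_num at h1
  have hlogsum : Summable (fun P : ↥(Tᶜ) => Complex.log (1 + z P.1)) := by
    refine Summable.of_norm_bounded (g := fun P : ↥(Tᶜ) => 3/2 * u P.1)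
      ((hsum.mul_left (3/2)).subtype _) (fun P => ?_)
    refine le_trans (Complex.norm_log_one_add_half_le_self (hz12 P)) ?_
    exact mul_le_mul_of_nonneg_left (hu P.1) (by norm_num)
  have h2 := hlogsum.hasSum.cexp
  have hfe : (fun P : ↥(Tᶜ) => Complex.exp (Complex.log (1 + z P.1)))
      = fun P : ↥(Tᶜ) => 1 + z P.1 := funext fun P => Complex.exp_log (hne P)
  rw [← hfe]
  exact h2

end EulerAux

/-- For a number field `K`, the Euler product `f_K(s) = ∏_P (1 + (N(P)−1)^{−s} − N(P)^{−s})`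
over the nonzero prime ideals `P` of `𝓞 K` is multipliable for `Re(s) > 0`, and defines a
holomorphic function on the open half-plane `Re(s) > 0`. -/
theorem numberField_euler_factor_product_holomorphic
    (K : Type*) [Field K] [NumberField K] :
    (∀ s : ℂ, 0 < s.re →
      Multipliable (fun P : {P : Ideal (𝓞 K) // P.IsPrime ∧ P ≠ ⊥} =>
        1 + ((Nat.card (𝓞 K ⧸ P.1) : ℂ) - 1) ^ (-s) - (Nat.card (𝓞 K ⧸ P.1) : ℂ) ^ (-s))) ∧
    DifferentiableOn ℂ
      (fun s : ℂ => ∏' P : {P : Ideal (𝓞 K) // P.IsPrime ∧ P ≠ ⊥},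
        (1 + ((Nat.card (𝓞 K ⧸ P.1) : ℂ) - 1) ^ (-s) - (Nat.card (𝓞 K ⧸ P.1) : ℂ) ^ (-s)))
      {s : ℂ | 0 < s.re} := by
  classical
  have h2le : ∀ P : {P : Ideal (𝓞 K) // P.IsPrime ∧ P ≠ ⊥}, 2 ≤ Nat.card (𝓞 K ⧸ P.1) :=
    fun P => by rw [EulerAux.card_eq]; exact EulerAux.two_le_norm K P
  constructor
  · -- Multipliability
    intro s hs
    set R := ‖s‖ with hR
    set C := 4 * (R + 1) * Real.exp R with hCdef
    have hC0 : 0 ≤ C := by positivity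
    have hbound : ∀ P : {P : Ideal (𝓞 K) // P.IsPrime ∧ P ≠ ⊥},
        ‖((Nat.card (𝓞 K ⧸ P.1) : ℂ) - 1) ^ (-s) - (Nat.card (𝓞 K ⧸ P.1) : ℂ) ^ (-s)‖
          ≤ C * (Nat.card (𝓞 K ⧸ P.1) : ℝ) ^ (-1 - s.re) :=
      fun P => EulerAux.key_bound le_rfl (h2le P)
    set T : Set {P : Ideal (𝓞 K) // P.IsPrime ∧ P ≠ ⊥} :=
      {P | ¬ C * (Nat.card (𝓞 K ⧸ P.1) : ℝ) ^ (-1 - s.re) ≤ 1/2} with hT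
    have hTfin : T.Finite := EulerAux.finite_bad K C s.re hs.le
    have hgood : ∀ P ∉ T, C * (Nat.card (𝓞 K ⧸ P.1) : ℝ) ^ (-1 - s.re) ≤ 1/2 := by
      intro P hP
      by_contra h
      exact hP h
    have hsumu : Summable (fun P : {P : Ideal (𝓞 K) // P.IsPrime ∧ P ≠ ⊥} =>
        C * (Nat.card (𝓞 K ⧸ P.1) : ℝ) ^ (-1 - s.re)) :=
      (EulerAux.summable_rpow K _ (by linarith)).mul_left C
    have htail := EulerAux.tail_hasProd K s T _ hsumu hbound hgood
    exact Multipliable.mul_compl (hTfin.multipliable _) htail.multipliable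
  · -- Differentiability
    intro s₀ hs₀
    rw [Set.mem_setOf_eq] at hs₀
    set σ := s₀.re with hσ
    set U := Metric.ball s₀ (σ/2) with hU
    have hUopen : IsOpen U := Metric.isOpen_ball
    have hs₀U : s₀ ∈ U := Metric.mem_ball_self (by positivity)
    have hUre : ∀ s ∈ U, σ/2 < s.re := by
      intro s hsU
      rw [hU, Metric.mem_ball, Complex.dist_eq] at hsU
      have h1 : |(s - s₀).re| ≤ ‖s - s₀‖ := Complex.abs_re_le_norm _
      rw [Complex.sub_re] at h1
      have h2 := abs_le.mp h1
      linarith [h2.1]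
    have hUnorm : ∀ s ∈ U, ‖s‖ ≤ ‖s₀‖ + σ/2 := by
      intro s hsU
      rw [hU, Metric.mem_ball, Complex.dist_eq] at hsU
      have := norm_sub_norm_le s s₀
      linarith
    set R := ‖s₀‖ + σ/2 with hR
    set C := 4 * (R + 1) * Real.exp R with hCdef
    have hC0 : 0 ≤ C := by positivity
    set δ := σ/2 with hδdef
    have hδ : 0 < δ := by positivity
    have hbound : ∀ s ∈ U, ∀ P : {P : Ideal (𝓞 K) // P.IsPrime ∧ P ≠ ⊥},
        ‖((Nat.card (𝓞 K ⧸ P.1) : ℂ) - 1) ^ (-s) - (Nat.card (𝓞 K ⧸ P.1) : ℂ) ^ (-s)‖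
          ≤ C * (Nat.card (𝓞 K ⧸ P.1) : ℝ) ^ (-1 - δ) := by
      intro s hsU P
      refine le_trans (EulerAux.key_bound (hUnorm s hsU) (h2le P)) ?_
      refine mul_le_mul_of_nonneg_left ?_ hC0
      refine Real.rpow_le_rpow_of_exponent_le ?_ ?_
      · exact_mod_cast (h2le P).trans' (by norm_num)
      · have := hUre s hsU
        linarith
    set T : Set {P : Ideal (𝓞 K) // P.IsPrime ∧ P ≠ ⊥} :=
      {P | ¬ C * (Nat.card (𝓞 K ⧸ P.1) : ℝ) ^ (-1 - δ) ≤ 1/2} with hT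
    have hTfin : T.Finite := EulerAux.finite_bad K C δ hδ.le
    haveI : Fintype ↥T := hTfin.fintype
    have hgood : ∀ P ∉ T, C * (Nat.card (𝓞 K ⧸ P.1) : ℝ) ^ (-1 - δ) ≤ 1/2 := by
      intro P hP
      by_contra h
      exact hP h
    -- the factor functions
    set F : {P : Ideal (𝓞 K) // P.IsPrime ∧ P ≠ ⊥} → ℂ → ℂ := fun P s =>
      1 + ((Nat.card (𝓞 K ⧸ P.1) : ℂ) - 1) ^ (-s) - (Nat.card (𝓞 K ⧸ P.1) : ℂ) ^ (-s) with hF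
    have hFdiff : ∀ P, Differentiable ℂ (F P) := by
      intro P
      have hb1 : ((Nat.card (𝓞 K ⧸ P.1) : ℂ) - 1) ≠ 0 := by
        rw [sub_ne_zero]
        intro h
        have : (Nat.card (𝓞 K ⧸ P.1) : ℂ) = ((1 : ℕ) : ℂ) := by rw [h]; norm_num
        have h5 := Nat.cast_injective (R := ℂ) this
        have h6 := h2le P
        omega
      have hb2 : ((Nat.card (𝓞 K ⧸ P.1) : ℂ)) ≠ 0 := by
        have := h2le P
        exact_mod_cast (by omega : Nat.card (𝓞 K ⧸ P.1) ≠ 0)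
      have h1 : Differentiable ℂ (fun z : ℂ => ((Nat.card (𝓞 K ⧸ P.1) : ℂ) - 1) ^ (-z)) :=
        differentiable_id.neg.const_cpow (Or.inl hb1)
      have h2 : Differentiable ℂ (fun z : ℂ => ((Nat.card (𝓞 K ⧸ P.1) : ℂ)) ^ (-z)) :=
        differentiable_id.neg.const_cpow (Or.inl hb2)
      exact ((differentiable_const 1).add h1).sub h2
    have hre : ∀ s ∈ U, ∀ P ∉ T, (1:ℝ)/2 ≤ (F P s).re := by
      intro s hsU P hP
      have h1 := le_trans (hbound s hsU P) (hgood P hP)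
      have h2 : F P s = 1 + (((Nat.card (𝓞 K ⧸ P.1) : ℂ) - 1) ^ (-s)
          - (Nat.card (𝓞 K ⧸ P.1) : ℂ) ^ (-s)) := add_sub_assoc _ _ _
      rw [h2, Complex.add_re, Complex.one_re]
      have h3 := Complex.abs_re_le_norm ((((Nat.card (𝓞 K ⧸ P.1) : ℂ) - 1) ^ (-s)
          - (Nat.card (𝓞 K ⧸ P.1) : ℂ) ^ (-s)))
      have h4 := abs_le.mp (le_trans h3 h1)
      linarith [h4.1]
    -- the log tail sum
    set S : ℂ → ℂ := fun z => ∑' P : ↥(Tᶜ), Complex.log (F P.1 z) with hS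
    have hSdiff : DifferentiableOn ℂ S U := by
      refine differentiableOn_tsum_of_summable_norm
        (u := fun P : ↥(Tᶜ) => 3/2 * (C * (Nat.card (𝓞 K ⧸ P.1.1) : ℝ) ^ (-1 - δ)))
        ((((EulerAux.summable_rpow K _ (by linarith)).mul_left C).mul_left (3/2)).subtype _)
        (fun P => ?_) hUopen (fun P w hw => ?_)
      · intro z hz
        have hmem : F P.1 z ∈ Complex.slitPlane := by
          rw [Complex.mem_slitPlane_iff]
          left
          have := hre z hz P.1 P.2
          linarith
        exact ((Complex.differentiableAt_log hmem).comp z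
          ((hFdiff P.1).differentiableAt)).differentiableWithinAt
      · have h2 : F P.1 w = 1 + (((Nat.card (𝓞 K ⧸ P.1.1) : ℂ) - 1) ^ (-w)
            - (Nat.card (𝓞 K ⧸ P.1.1) : ℂ) ^ (-w)) := add_sub_assoc _ _ _
        rw [h2]
        refine le_trans (Complex.norm_log_one_add_half_le_self
          (le_trans (hbound w hw P.1) (hgood P.1 P.2))) ?_
        exact mul_le_mul_of_nonneg_left (hbound w hw P.1) (by norm_num)
    -- the local model function
    set G : ℂ → ℂ := fun z => (∏ P : ↥T, F P.1 z) * Complex.exp (S z) with hG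
    have hGdiff : DifferentiableOn ℂ G U := by
      refine DifferentiableOn.mul ?_ hSdiff.cexp
      exact DifferentiableOn.fun_finsetProd fun (P : ↥T) _ => (hFdiff P.1).differentiableOn
    have hEq : Set.EqOn (fun s : ℂ => ∏' P : {P : Ideal (𝓞 K) // P.IsPrime ∧ P ≠ ⊥}, F P s) G U := by
      intro z hz
      have hTprod : HasProd (fun P : ↥T => F P.1 z) (∏ P : ↥T, F P.1 z) :=
        hasProd_fintype _
      have htail := EulerAux.tail_hasProd K z T _
        (((EulerAux.summable_rpow K _ (by linarith)).mul_left C))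
        (hbound z hz) hgood
      show ∏' P : {P : Ideal (𝓞 K) // P.IsPrime ∧ P ≠ ⊥}, F P z
          = (∏ P : ↥T, F P.1 z) * Complex.exp (S z)
      refine HasProd.tprod_eq ?_
      exact HasProd.mul_compl (f := fun P => F P z) hTprod htail
    exact ((hGdiff.differentiableAt (hUopen.mem_nhds hs₀U)).congr_of_eventuallyEq
      (hEq.eventuallyEq_of_mem (hUopen.mem_nhds hs₀U))).differentiableWithinAt
end

section
/- Let K be a number field with ring of integers O_K, and for a nonzero ideal I of O_K let φ_K(I) = #(O_K/I)^×. Then for every complex number s with Re(s) > 1, the family I ↦ φ_K(I)^{−s} (principal-branch complex powers), indexed by the nonzero ideals I of O_K, is absolutely summable. -/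
set_option maxHeartbeats 1000000
set_option synthInstance.maxHeartbeats 400000
set_option linter.unusedSectionVars false

open NumberField Ideal UniqueFactorizationMonoid

section Aux
variable {K : Type*} [Field K] [NumberField K]
local notation "R" => 𝓞 K

noncomputable def idealPhi (I : Ideal R) : ℕ := Nat.card ((R ⧸ I)ˣ)

lemma quot_finite {I : Ideal R} (h : I ≠ ⊥) : Finite (R ⧸ I) := by
  rw [← Ideal.absNorm_ne_zero_iff]
  exact (Ideal.absNorm_pos_iff_mem_nonZeroDivisors.mpr
    (mem_nonZeroDivisors_iff_ne_zero.mpr h)).ne'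

lemma card_quot_eq {I : Ideal R} : Nat.card (R ⧸ I) = Ideal.absNorm I := by
  rw [Ideal.absNorm_apply, Submodule.cardQuot_apply]

lemma idealPhi_pow_prime_bound {p : Ideal R} (hp : p.IsPrime) (hb : p ≠ ⊥) {k : ℕ} (hk : 1 ≤ k) :
    Ideal.absNorm p ^ k ≤ 2 * idealPhi (p ^ k) := by
  classical
  have hpm : p.IsMaximal := hp.isMaximal hb
  set N := Ideal.absNorm p with hN
  have hNpos : 0 < N := Ideal.absNorm_pos_iff_mem_nonZeroDivisors.mpr
    (mem_nonZeroDivisors_iff_ne_zero.mpr hb)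
  have hpk : (p ^ k : Ideal R) ≠ ⊥ := by
    simpa [Ideal.zero_eq_bot] using pow_ne_zero k (show p ≠ 0 by simpa [Ideal.zero_eq_bot] using hb)
  have hfinQ : Finite (R ⧸ p ^ k) := quot_finite hpk
  have hfinp : Finite (R ⧸ p) := quot_finite hb
  -- card of the quotient is N ^ k
  have hcardQ : Nat.card (R ⧸ p ^ k) = N ^ k := by
    rw [card_quot_eq, map_pow]
  have hcardp : Nat.card (R ⧸ p) = N := card_quot_eq
  -- N ≥ 2
  have hN2 : 2 ≤ N := by
    rw [← hcardp]
    exact Finite.one_lt_card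
  -- the factor map
  have hle : p ^ k ≤ p := Ideal.pow_le_self (by omega)
  set f : (R ⧸ p ^ k) →+* (R ⧸ p) := Ideal.Quotient.factor hle with hf
  have hfsurj : Function.Surjective f := by
    intro y
    obtain ⟨x, rfl⟩ := Ideal.Quotient.mk_surjective y
    exact ⟨Ideal.Quotient.mk _ x, rfl⟩
  letI : Field (R ⧸ p) := Ideal.Quotient.field p
  set m : Ideal (R ⧸ p ^ k) := RingHom.ker f with hm
  have hmmax : m.IsMaximal := RingHom.ker_isMaximal_of_surjective f hfsurj
  -- m is the unique maximal ideal
  have key : ∀ M : Ideal (R ⧸ p ^ k), M.IsMaximal →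
      Ideal.comap (Ideal.Quotient.mk (p ^ k)) M = p := by
    intro M hM
    have hcom : (Ideal.comap (Ideal.Quotient.mk (p ^ k)) M).IsPrime :=
      Ideal.comap_isPrime _ M (H := hM.isPrime)
    have hpow : p ^ k ≤ Ideal.comap (Ideal.Quotient.mk (p ^ k)) M := by
      intro x hx
      simp only [Ideal.mem_comap, Ideal.Quotient.eq_zero_iff_mem.mpr hx]
      exact M.zero_mem
    have hple : p ≤ Ideal.comap (Ideal.Quotient.mk (p ^ k)) M := hcom.le_of_pow_le hpow
    have hne : Ideal.comap (Ideal.Quotient.mk (p ^ k)) M ≠ ⊤ := by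
      intro h
      refine hM.ne_top ((Ideal.eq_top_iff_one M).mpr ?_)
      have h1 : (1 : R) ∈ Ideal.comap (Ideal.Quotient.mk (p ^ k)) M := h ▸ Submodule.mem_top
      simpa using h1
    exact (hpm.eq_of_le hne hple).symm
  have huniq : ∀ M : Ideal (R ⧸ p ^ k), M.IsMaximal → M = m := by
    intro M hM
    have e1 : Ideal.comap (Ideal.Quotient.mk (p ^ k)) M
        = Ideal.comap (Ideal.Quotient.mk (p ^ k)) m := by rw [key M hM, key m hmmax]
    calc M = Ideal.map (Ideal.Quotient.mk (p ^ k)) (Ideal.comap (Ideal.Quotient.mk (p ^ k)) M) :=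
          (Ideal.map_comap_of_surjective _ Ideal.Quotient.mk_surjective M).symm
      _ = Ideal.map (Ideal.Quotient.mk (p ^ k)) (Ideal.comap (Ideal.Quotient.mk (p ^ k)) m) := by
          rw [e1]
      _ = m := Ideal.map_comap_of_surjective _ Ideal.Quotient.mk_surjective m
  -- nonunits are contained in m
  have hnonunit : ∀ x : R ⧸ p ^ k, ¬ IsUnit x → x ∈ m := by
    intro x hx
    have hxspan : Ideal.span {x} ≠ ⊤ := fun h => hx (Ideal.span_singleton_eq_top.mp h)
    obtain ⟨M, hM, hxM⟩ := Ideal.exists_le_maximal _ hxspan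
    exact huniq M hM ▸ hxM (Ideal.subset_span rfl)
  -- card of m
  have hcardm : Nat.card m = N ^ (k - 1) := by
    have hs : (m.toAddSubgroup : AddSubgroup (R ⧸ p ^ k)) =
        AddMonoidHom.ker f.toAddMonoidHom := by
      ext x; simp [RingHom.mem_ker, AddMonoidHom.mem_ker, hm]
    have hlag := AddSubgroup.card_eq_card_quotient_mul_card_addSubgroup m.toAddSubgroup
    have hquot : Nat.card ((R ⧸ p ^ k) ⧸ m.toAddSubgroup) = N := by
      rw [hs, Nat.card_congr (QuotientAddGroup.quotientKerEquivOfSurjective f.toAddMonoidHom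
        hfsurj).toEquiv, hcardp]
    rw [hquot, hcardQ] at hlag
    have hcards : Nat.card m = Nat.card m.toAddSubgroup := rfl
    have hk' : N ^ k = N * N ^ (k - 1) := by
      conv_lhs => rw [show k = 1 + (k-1) by omega]
      rw [pow_add, pow_one]
    rw [hcards]
    exact Nat.eq_of_mul_eq_mul_left hNpos (by rw [← hlag, hk'])
  -- units count
  have hinj : Function.Injective
      (fun x : ((m : Set (R ⧸ p ^ k))ᶜ : Set (R ⧸ p ^ k)) =>
        (of_not_not (fun h => x.2 (hnonunit x.1 h)) : IsUnit x.1).unit) := by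
    intro x y hxy
    have h := congrArg Units.val hxy
    simp only [IsUnit.unit_spec] at h
    exact Subtype.ext h
  have hcompl : Nat.card ((m : Set (R ⧸ p ^ k))ᶜ : Set (R ⧸ p ^ k)) ≤ idealPhi (p ^ k) :=
    Nat.card_le_card_of_injective _ hinj
  have hsplit : Nat.card (m : Set (R ⧸ p ^ k)) +
      Nat.card ((m : Set (R ⧸ p ^ k))ᶜ : Set (R ⧸ p ^ k)) = N ^ k := by
    rw [Nat.card_coe_set_eq, Nat.card_coe_set_eq,
      Set.ncard_add_ncard_compl _ (Set.toFinite _), hcardQ]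
  have hmcard : Nat.card (m : Set (R ⧸ p ^ k)) = N ^ (k - 1) := by
    rw [← hcardm]; rfl
  have h2 : 2 * N ^ (k - 1) ≤ N ^ k := by
    calc 2 * N ^ (k-1) ≤ N * N ^ (k-1) := by
          exact Nat.mul_le_mul_right _ hN2
      _ = N ^ k := by
          conv_rhs => rw [show k = 1 + (k-1) by omega]
          rw [pow_add, pow_one]
  omega


lemma quot_finite' {I : Ideal R} (h : I ≠ ⊥) : Finite (R ⧸ I) := by
  rw [← Ideal.absNorm_ne_zero_iff]
  exact (Ideal.absNorm_pos_iff_mem_nonZeroDivisors.mpr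
    (mem_nonZeroDivisors_iff_ne_zero.mpr h)).ne'

lemma absNorm_two_le {p : Ideal R} (hp : p.IsPrime) (hb : p ≠ ⊥) : 2 ≤ Ideal.absNorm p := by
  have := quot_finite' hb
  have hpm : p.IsMaximal := hp.isMaximal hb
  have hnt : Nontrivial (R ⧸ p) := Ideal.Quotient.nontrivial_iff.mpr hp.ne_top
  have : Nat.card (R ⧸ p) = Ideal.absNorm p := by
    rw [Ideal.absNorm_apply, Submodule.cardQuot_apply]
  rw [← this]
  exact Finite.one_lt_card

lemma minFac_facts {p : Ideal R} (hp : p.IsPrime) (hb : p ≠ ⊥) :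
    Nat.Prime (Ideal.absNorm p).minFac ∧ ((Ideal.absNorm p).minFac : R) ∈ p := by
  have hfin := quot_finite' hb
  have hpm : p.IsMaximal := hp.isMaximal hb
  letI : Field (R ⧸ p) := Ideal.Quotient.field p
  letI : Fintype (R ⧸ p) := Fintype.ofFinite _
  letI : CharP (R ⧸ p) (ringChar (R ⧸ p)) := ringChar.charP _
  obtain ⟨n, hrp, hcard⟩ := FiniteField.card (R ⧸ p) (ringChar (R ⧸ p))
  have habs : Ideal.absNorm p = ringChar (R ⧸ p) ^ (n : ℕ) := by
    rw [Ideal.absNorm_apply, Submodule.cardQuot_apply, Nat.card_eq_fintype_card, hcard]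
  have hmin : (Ideal.absNorm p).minFac = ringChar (R ⧸ p) := by
    rw [habs, Nat.Prime.pow_minFac hrp (by positivity)]
  refine ⟨hmin ▸ hrp, ?_⟩
  rw [hmin, ← Ideal.Quotient.eq_zero_iff_mem, map_natCast]
  exact CharP.cast_eq_zero _ _

lemma absNorm_span_natCast (q : ℕ) :
    Ideal.absNorm (Ideal.span {(q : R)}) = q ^ Module.finrank ℤ R := by
  rw [Ideal.absNorm_span_singleton,
    show ((q : R)) = algebraMap ℤ R (q : ℤ) by simp,
    Algebra.norm_algebraMap_of_basis (Module.Free.chooseBasis ℤ R),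
    Module.finrank_eq_card_chooseBasisIndex]
  simp [Int.natAbs_pow]

lemma fiber_card_le {q : ℕ} (hq : Nat.Prime q) (P : Finset (Ideal R))
    (hP : ∀ p ∈ P, p.IsPrime ∧ p ≠ ⊥ ∧ (q : R) ∈ p ∧ q ≤ Ideal.absNorm p) :
    P.card ≤ Module.finrank ℤ R := by
  classical
  have hdvd : (∏ p ∈ P, p) ∣ Ideal.span {(q : R)} :=
    Finset.prod_primes_dvd _
      (fun p hp => Ideal.prime_of_isPrime (hP p hp).2.1 (hP p hp).1)
      (fun p hp => Ideal.dvd_iff_le.mpr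
        ((Ideal.span_singleton_le_iff_mem _).mpr (hP p hp).2.2.1))
  have hnormdvd : (∏ p ∈ P, Ideal.absNorm p) ∣ q ^ Module.finrank ℤ R := by
    rw [← _root_.absNorm_span_natCast, ← map_prod]
    exact map_dvd _ hdvd
  have hle : q ^ P.card ≤ ∏ p ∈ P, Ideal.absNorm p := by
    rw [← Finset.prod_const]
    exact Finset.prod_le_prod' fun p hp => (hP p hp).2.2.2
  have hub : (∏ p ∈ P, Ideal.absNorm p) ≤ q ^ Module.finrank ℤ R :=
    Nat.le_of_dvd (pow_pos hq.pos _) hnormdvd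
  exact (Nat.pow_le_pow_iff_right hq.one_lt).mp (hle.trans hub)

lemma prime_sum_bound {σ : ℝ} (hσ : 1 < σ) (P : Finset (Ideal R))
    (hP : ∀ p ∈ P, p.IsPrime ∧ p ≠ ⊥) :
    ∑ p ∈ P, (Ideal.absNorm p : ℝ) ^ (-σ) ≤
      (Module.finrank ℤ R) * ∑' n : ℕ, ((n : ℝ) ^ σ)⁻¹ := by
  classical
  set g : Ideal R → ℕ := fun p => (Ideal.absNorm p).minFac with hg
  have hsummable : Summable (fun n : ℕ => ((n : ℝ) ^ σ)⁻¹) :=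
    Real.summable_nat_rpow_inv.mpr hσ
  have step1 : ∑ p ∈ P, (Ideal.absNorm p : ℝ) ^ (-σ) ≤ ∑ p ∈ P, ((g p : ℝ) ^ σ)⁻¹ := by
    refine Finset.sum_le_sum fun p hp => ?_
    obtain ⟨hq, _⟩ := minFac_facts (hP p hp).1 (hP p hp).2
    have h2 : 2 ≤ Ideal.absNorm p := absNorm_two_le (hP p hp).1 (hP p hp).2
    have hgle : g p ≤ Ideal.absNorm p := Nat.minFac_le (by omega)
    have hgpos : (0:ℝ) < (g p : ℝ) := by exact_mod_cast hq.pos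
    rw [Real.rpow_neg (by positivity)]
    refine inv_anti₀ (by positivity) ?_
    exact Real.rpow_le_rpow hgpos.le (by exact_mod_cast hgle) (by linarith)
  have step2 : ∑ p ∈ P, ((g p : ℝ) ^ σ)⁻¹ ≤
      ∑ q ∈ P.image g, (Module.finrank ℤ R) * ((q : ℝ) ^ σ)⁻¹ := by
    rw [← Finset.sum_fiberwise_of_maps_to (fun p hp => Finset.mem_image_of_mem g hp)
      (fun p => ((g p : ℝ) ^ σ)⁻¹)]
    refine Finset.sum_le_sum fun q hq => ?_
    obtain ⟨p₀, hp₀, rfl⟩ := Finset.mem_image.mp hq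
    have hqprime : Nat.Prime (g p₀) := (minFac_facts (hP p₀ hp₀).1 (hP p₀ hp₀).2).1
    have hcard : (P.filter (fun p => g p = g p₀)).card ≤ Module.finrank ℤ R := by
      refine fiber_card_le hqprime _ fun p hp => ?_
      obtain ⟨hpP, hgp⟩ := Finset.mem_filter.mp hp
      obtain ⟨hq', hmem⟩ := minFac_facts (hP p hpP).1 (hP p hpP).2
      have h2 : 2 ≤ Ideal.absNorm p := absNorm_two_le (hP p hpP).1 (hP p hpP).2
      exact ⟨(hP p hpP).1, (hP p hpP).2, hgp ▸ hmem, hgp ▸ Nat.minFac_le (by omega)⟩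
    calc ∑ p ∈ P.filter (fun p => g p = g p₀), ((g p : ℝ) ^ σ)⁻¹
        = ∑ p ∈ P.filter (fun p => g p = g p₀), (((g p₀ : ℕ) : ℝ) ^ σ)⁻¹ :=
          Finset.sum_congr rfl fun p hp => by rw [(Finset.mem_filter.mp hp).2]
      _ = (P.filter (fun p => g p = g p₀)).card * (((g p₀ : ℕ) : ℝ) ^ σ)⁻¹ := by
          rw [Finset.sum_const, nsmul_eq_mul]
      _ ≤ (Module.finrank ℤ R) * (((g p₀ : ℕ) : ℝ) ^ σ)⁻¹ := by
          refine mul_le_mul_of_nonneg_right ?_ (by positivity)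
          exact_mod_cast hcard
  have step3 : ∑ q ∈ P.image g, ((q : ℝ) ^ σ)⁻¹ ≤ ∑' n : ℕ, ((n : ℝ) ^ σ)⁻¹ :=
    Summable.sum_le_tsum _ (fun n _ => by positivity) hsummable
  calc ∑ p ∈ P, (Ideal.absNorm p : ℝ) ^ (-σ) ≤ ∑ p ∈ P, ((g p : ℝ) ^ σ)⁻¹ := step1
    _ ≤ ∑ q ∈ P.image g, (Module.finrank ℤ R) * ((q : ℝ) ^ σ)⁻¹ := step2
    _ = (Module.finrank ℤ R) * ∑ q ∈ P.image g, ((q : ℝ) ^ σ)⁻¹ := by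
        rw [Finset.mul_sum]
    _ ≤ (Module.finrank ℤ R) * ∑' n : ℕ, ((n : ℝ) ^ σ)⁻¹ := by
        refine mul_le_mul_of_nonneg_left step3 (by positivity)

lemma idealPhi_pos {I : Ideal R} (h : I ≠ ⊥) : 0 < idealPhi I := by
  have := quot_finite h
  exact Nat.card_pos

lemma idealPhi_top : idealPhi (⊤ : Ideal R) = 1 := by
  have : Subsingleton ((R ⧸ (⊤ : Ideal R))ˣ) := inferInstance
  exact Nat.card_eq_one_iff_unique.mpr ⟨this, ⟨1⟩⟩

lemma idealPhi_mul {I J : Ideal R} (h : IsCoprime I J) :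
    idealPhi (I * J) = idealPhi I * idealPhi J := by
  unfold idealPhi
  rw [Nat.card_congr ((Units.mapEquiv (Ideal.quotientMulEquivQuotientProd I J h).toMulEquiv).trans
    MulEquiv.prodUnits).toEquiv, Nat.card_prod]

lemma coprime_pow_pow {p q : Ideal R} (hp : Prime p) (hq : Prime q) (hne : p ≠ q) (a b : ℕ) :
    IsCoprime (p ^ a) (q ^ b) := by
  have hpm : p.IsMaximal := (Ideal.isPrime_of_prime hp).isMaximal (by
    simpa [Ideal.zero_eq_bot] using hp.ne_zero)
  have hqm : q.IsMaximal := (Ideal.isPrime_of_prime hq).isMaximal (by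
    simpa [Ideal.zero_eq_bot] using hq.ne_zero)
  have : IsCoprime p q := by
    rw [Ideal.isCoprime_iff_sup_eq]; exact Ideal.IsMaximal.coprime_of_ne hpm hqm hne
  exact this.pow

lemma idealPhi_prod (T : Finset (Ideal R)) (hT : ∀ p ∈ T, Prime p) (n : Ideal R → ℕ) :
    idealPhi (∏ p ∈ T, p ^ n p) = ∏ p ∈ T, idealPhi (p ^ n p) := by
  classical
  induction T using Finset.induction with
  | empty => simpa using idealPhi_top
  | @insert p T' hx ih =>
    rw [Finset.prod_insert hx, Finset.prod_insert hx, ← ih (fun q hq => hT q (Finset.mem_insert_of_mem hq)),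
      idealPhi_mul]
    exact IsCoprime.prod_right fun q hq =>
      coprime_pow_pow (hT p (Finset.mem_insert_self p T'))
        (hT q (Finset.mem_insert_of_mem hq)) (fun h => hx (h ▸ hq)) _ _


lemma rpow_neg_anti {x y σ : ℝ} (hx : 0 < x) (hxy : x ≤ y) (hσ : 0 ≤ σ) :
    y ^ (-σ) ≤ x ^ (-σ) := by
  rw [Real.rpow_neg (by linarith), Real.rpow_neg hx.le]
  exact inv_anti₀ (Real.rpow_pos_of_pos hx _) (Real.rpow_le_rpow hx.le hxy hσ)

lemma pow_ne_bot {p : Ideal R} (hb : p ≠ ⊥) (k : ℕ) : p ^ k ≠ ⊥ := by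
  rw [← Ideal.zero_eq_bot]
  exact pow_ne_zero k (by rw [Ideal.zero_eq_bot]; exact hb)

lemma factor_bound {σ : ℝ} (hσ : 1 < σ) {p : Ideal R} (hp : p.IsPrime) (hb : p ≠ ⊥) (M : ℕ) :
    ∑ k ∈ Finset.range (M + 1), ((idealPhi (p ^ k) : ℝ)) ^ (-σ) ≤
      1 + ((2:ℝ) ^ σ * 2) * (Ideal.absNorm p : ℝ) ^ (-σ) := by
  have hN2 : 2 ≤ Ideal.absNorm p := absNorm_two_le hp hb
  set N := Ideal.absNorm p with hNdef
  have hNR : (2:ℝ) ≤ (N : ℝ) := by exact_mod_cast hN2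
  set t : ℝ := (N : ℝ) ^ (-σ) with ht
  have htpos : 0 < t := Real.rpow_pos_of_pos (by linarith) _
  have hthalf : t ≤ 1/2 := by
    have h1 : t ≤ (2:ℝ) ^ (-σ) := rpow_neg_anti (by norm_num) hNR (by linarith)
    have h2 : (2:ℝ) ^ (-σ) ≤ (2:ℝ) ^ (-(1:ℝ)) :=
      Real.rpow_le_rpow_of_exponent_le (by norm_num) (by linarith)
    have h3 : (2:ℝ) ^ (-(1:ℝ)) = 1/2 := by
      rw [Real.rpow_neg_one]; norm_num
    exact h1.trans (h2.trans_eq h3)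
  have h2σ : (0:ℝ) < (2:ℝ) ^ σ := Real.rpow_pos_of_pos (by norm_num) σ
  have hterm : ∀ k : ℕ, ((idealPhi (p ^ (k+1)) : ℝ)) ^ (-σ) ≤ (2:ℝ) ^ σ * t ^ (k+1) := by
    intro k
    have hkey := idealPhi_pow_prime_bound hp hb (k := k + 1) (by omega)
    have hphipos : 0 < idealPhi (p ^ (k+1)) := idealPhi_pos (pow_ne_bot hb (k+1))
    have hkeyR : ((N : ℝ) ^ (k+1)) / 2 ≤ (idealPhi (p ^ (k+1)) : ℝ) := by
      rw [div_le_iff₀ (by norm_num)]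
      calc ((N:ℝ))^(k+1) = ((N ^ (k+1) : ℕ) : ℝ) := by push_cast; ring
        _ ≤ ((2 * idealPhi (p ^ (k+1)) : ℕ) : ℝ) := by exact_mod_cast hkey
        _ = (idealPhi (p ^ (k+1)) : ℝ) * 2 := by push_cast; ring
    have h1 : ((idealPhi (p ^ (k+1)) : ℝ)) ^ (-σ) ≤ (((N : ℝ) ^ (k+1)) / 2) ^ (-σ) :=
      rpow_neg_anti (by positivity) hkeyR (by linarith)
    have hNpow : (((N:ℝ)) ^ (k+1)) ^ (-σ) = t ^ (k+1) := by
      rw [← Real.rpow_natCast ((N:ℝ)) (k+1), ← Real.rpow_mul (by positivity),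
        mul_comm (((k+1 : ℕ) : ℝ)) (-σ), Real.rpow_mul (by positivity), Real.rpow_natCast]
    have h2 : (((N : ℝ) ^ (k+1)) / 2) ^ (-σ) = (2:ℝ) ^ σ * t ^ (k+1) := by
      rw [Real.div_rpow (by positivity) (by norm_num), hNpow,
        Real.rpow_neg (by norm_num : (0:ℝ) ≤ 2), div_eq_mul_inv, inv_inv]
      ring
    exact h1.trans_eq h2
  have h0 : ((idealPhi (p ^ 0) : ℝ)) ^ (-σ) = 1 := by
    rw [pow_zero, Ideal.one_eq_top, idealPhi_top]
    simp
  rw [Finset.sum_range_succ', h0]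
  have hsum1 : ∑ k ∈ Finset.range M, ((idealPhi (p ^ (k+1)) : ℝ)) ^ (-σ) ≤
      ∑ k ∈ Finset.range M, (2:ℝ)^σ * t^(k+1) :=
    Finset.sum_le_sum fun k _ => hterm k
  have hgeom : ∑ k ∈ Finset.range M, t^(k+1) ≤ t * 2 := by
    have h1 : ∑ k ∈ Finset.range M, t^(k+1) = t * ∑ k ∈ Finset.range M, t^k := by
      rw [Finset.mul_sum]
      exact Finset.sum_congr rfl fun k _ => by ring
    have h2 : ∑ k ∈ Finset.range M, t^k ≤ (1-t)⁻¹ := by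
      refine (Summable.sum_le_tsum (Finset.range M) (fun k _ => by positivity) ?_).trans_eq
        (tsum_geometric_of_lt_one htpos.le (by linarith))
      exact summable_geometric_of_lt_one htpos.le (by linarith)
    have h3 : (1-t)⁻¹ ≤ 2 := by
      have hhalf : (1:ℝ)/2 ≤ 1 - t := by linarith
      calc (1-t)⁻¹ ≤ ((1:ℝ)/2)⁻¹ := inv_anti₀ (by norm_num) hhalf
        _ = 2 := by norm_num
    calc ∑ k ∈ Finset.range M, t^(k+1) = t * ∑ k ∈ Finset.range M, t^k := h1
      _ ≤ t * 2 := by nlinarith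
  have hsum2 : ∑ k ∈ Finset.range M, (2:ℝ)^σ * t^(k+1) = (2:ℝ)^σ * ∑ k ∈ Finset.range M, t^(k+1) := by
    rw [Finset.mul_sum]
  have := mul_le_mul_of_nonneg_left hgeom h2σ.le
  linarith

lemma main_bound {σ : ℝ} (hσ : 1 < σ) (S : Finset {I : Ideal R // I ≠ ⊥}) :
    ∑ I ∈ S, ((idealPhi I.1 : ℝ)) ^ (-σ) ≤
      Real.exp (((2:ℝ) ^ σ * 2) *
        ((Module.finrank ℤ R) * ∑' n : ℕ, ((n : ℝ) ^ σ)⁻¹)) := by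
  classical
  set T : Finset (Ideal R) := S.biUnion (fun I => (normalizedFactors I.1).toFinset) with hTdef
  have hT : ∀ p ∈ T, Prime p := by
    intro p hp
    obtain ⟨I, _, hpI⟩ := Finset.mem_biUnion.mp hp
    exact prime_of_normalized_factor p (Multiset.mem_toFinset.mp hpI)
  have hTb : ∀ p ∈ T, p.IsPrime ∧ p ≠ ⊥ := by
    intro p hp
    refine ⟨Ideal.isPrime_of_prime (hT p hp), ?_⟩
    rw [← Ideal.zero_eq_bot]
    exact (hT p hp).ne_zero
  set M : ℕ := S.sup (fun I => Multiset.card (normalizedFactors I.1)) with hMdef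
  set e : {I : Ideal R // I ≠ ⊥} → Ideal R → ℕ :=
    fun I p => Multiset.count p (normalizedFactors I.1) with hedef
  have hfact : ∀ I ∈ S, I.1 = ∏ p ∈ T, p ^ e I p := by
    intro I hI
    have h1 : (normalizedFactors I.1).prod = I.1 := _root_.prod_normalizedFactors_eq_self I.2
    rw [← h1, Finset.prod_multiset_count]
    refine Finset.prod_subset (fun p hp => Finset.mem_biUnion.mpr ⟨I, hI, hp⟩) ?_
    intro p _ hnp
    rw [Multiset.count_eq_zero_of_notMem (fun hmem => hnp (Multiset.mem_toFinset.mpr hmem)),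
      pow_zero]
  set a : Ideal R → ℕ → ℝ := fun p k => ((idealPhi (p ^ k) : ℝ)) ^ (-σ) with hadef
  have hphi : ∀ I ∈ S, ((idealPhi I.1 : ℝ)) ^ (-σ) = ∏ p ∈ T, a p (e I p) := by
    intro I hI
    rw [hfact I hI, idealPhi_prod T hT (e I), Nat.cast_prod,
      ← Real.finset_prod_rpow T _ (fun p _ => by positivity) (-σ)]
  set t : Ideal R → Finset ℕ := fun _ => Finset.range (M + 1) with htdef
  set Φ : {I : Ideal R // I ≠ ⊥} → ((p : Ideal R) → p ∈ T → ℕ) :=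
    fun I => fun p _ => e I p with hΦdef
  have hΦmem : ∀ I ∈ S, Φ I ∈ T.pi t := by
    intro I hI
    refine Finset.mem_pi.mpr fun p hp => Finset.mem_range.mpr ?_
    show e I p < M + 1
    have h1 : e I p ≤ Multiset.card (normalizedFactors I.1) := Multiset.count_le_card _ _
    have h2 : Multiset.card (normalizedFactors I.1) ≤ M :=
      Finset.le_sup (f := fun I : {I : Ideal R // I ≠ ⊥} => Multiset.card (normalizedFactors I.1)) hI
    omega
  have hΦinj : ∀ x ∈ S, ∀ y ∈ S, Φ x = Φ y → x = y := by
    intro x hx y hy hxy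
    refine Subtype.ext ?_
    rw [hfact x hx, hfact y hy]
    refine Finset.prod_congr rfl fun p hp => ?_
    have := congrFun (congrFun hxy p) hp
    simp only [hΦdef] at this
    rw [this]
  set G : ((p : Ideal R) → p ∈ T → ℕ) → ℝ :=
    fun g => ∏ x ∈ T.attach, a x.1 (g x.1 x.2) with hGdef
  have key : ∑ I ∈ S, ((idealPhi I.1 : ℝ)) ^ (-σ) ≤
      ∏ p ∈ T, ∑ k ∈ Finset.range (M + 1), a p k := by
    rw [Finset.prod_sum]
    calc ∑ I ∈ S, ((idealPhi I.1 : ℝ)) ^ (-σ)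
        = ∑ I ∈ S, G (Φ I) := by
          refine Finset.sum_congr rfl fun I hI => ?_
          rw [hphi I hI, ← Finset.prod_attach T (fun p => a p (e I p))]
      _ = ∑ g ∈ S.image Φ, G g :=
          (Finset.sum_image (f := G) (g := Φ) (fun x hx y hy h => hΦinj x hx y hy h)).symm
      _ ≤ ∑ g ∈ T.pi t, G g := by
          refine Finset.sum_le_sum_of_subset_of_nonneg ?_ ?_
          · intro g hg
            obtain ⟨I, hI, rfl⟩ := Finset.mem_image.mp hg
            exact hΦmem I hI
          · intro g _ _
            exact Finset.prod_nonneg fun x _ => Real.rpow_nonneg (Nat.cast_nonneg _) _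
  have step2 : ∏ p ∈ T, ∑ k ∈ Finset.range (M + 1), a p k ≤
      ∏ p ∈ T, Real.exp (((2:ℝ) ^ σ * 2) * (Ideal.absNorm p : ℝ) ^ (-σ)) := by
    refine Finset.prod_le_prod ?_ ?_
    · intro p _
      exact Finset.sum_nonneg fun k _ => Real.rpow_nonneg (Nat.cast_nonneg _) _
    · intro p hp
      refine (factor_bound hσ (hTb p hp).1 (hTb p hp).2 M).trans ?_
      have := Real.add_one_le_exp (((2:ℝ) ^ σ * 2) * (Ideal.absNorm p : ℝ) ^ (-σ))
      linarith
  have step3 : ∏ p ∈ T, Real.exp (((2:ℝ) ^ σ * 2) * (Ideal.absNorm p : ℝ) ^ (-σ)) =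
      Real.exp (∑ p ∈ T, ((2:ℝ) ^ σ * 2) * (Ideal.absNorm p : ℝ) ^ (-σ)) :=
    (Real.exp_sum _ _).symm
  have step4 : ∑ p ∈ T, ((2:ℝ) ^ σ * 2) * (Ideal.absNorm p : ℝ) ^ (-σ) ≤
      ((2:ℝ) ^ σ * 2) * ((Module.finrank ℤ R) * ∑' n : ℕ, ((n : ℝ) ^ σ)⁻¹) := by
    rw [← Finset.mul_sum]
    refine mul_le_mul_of_nonneg_left (prime_sum_bound hσ T hTb) ?_
    positivity
  calc ∑ I ∈ S, ((idealPhi I.1 : ℝ)) ^ (-σ)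
      ≤ ∏ p ∈ T, ∑ k ∈ Finset.range (M + 1), a p k := key
    _ ≤ ∏ p ∈ T, Real.exp (((2:ℝ) ^ σ * 2) * (Ideal.absNorm p : ℝ) ^ (-σ)) := step2
    _ = Real.exp (∑ p ∈ T, ((2:ℝ) ^ σ * 2) * (Ideal.absNorm p : ℝ) ^ (-σ)) := step3
    _ ≤ _ := Real.exp_le_exp.mpr step4

end Aux

/-- For a number field `K` with Euler function `φ_K(I) = #(𝓞 K / I)ˣ`, the family
`I ↦ φ_K(I)^{−s}` over the nonzero ideals of `𝓞 K` is absolutely summable whenever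
`Re(s) > 1`. -/
theorem numberField_totient_zeta_summable
    (K : Type*) [Field K] [NumberField K] (s : ℂ) (hs : 1 < s.re) :
    Summable (fun I : {I : Ideal (𝓞 K) // I ≠ ⊥} =>
      ‖(Nat.card ((𝓞 K ⧸ I.1)ˣ) : ℂ) ^ (-s)‖) := by
  have hfun : (fun I : {I : Ideal (𝓞 K) // I ≠ ⊥} =>
      ‖(Nat.card ((𝓞 K ⧸ I.1)ˣ) : ℂ) ^ (-s)‖) =
      fun I : {I : Ideal (𝓞 K) // I ≠ ⊥} => ((idealPhi I.1 : ℝ)) ^ (-s.re) := by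
    funext I
    rw [show (Nat.card ((𝓞 K ⧸ I.1)ˣ)) = idealPhi I.1 from rfl,
      Complex.norm_natCast_cpow_of_pos (idealPhi_pos I.2), Complex.neg_re]
  rw [hfun]
  exact summable_of_sum_le
    (fun I => Real.rpow_nonneg (Nat.cast_nonneg _) _)
    (fun S => main_bound hs S)
end
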